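/- arXiv:math/0604062 — 10 statements merged into one kernel-verified Lean document; each statement's English description precedes it below -/
import Mathlib

section
/- Let G be a topological group and α a contractive automorphism of G (i.e., αⁿ(x) → 1 as n → ∞ for each x ∈ G). If G is locally compact, Hausdorff, and nontrivial (G ≠ 1), then G is not compact and not discrete. -/
open Filter Topology Set Pointwise

/-- A nontrivial locally compact Hausdorff topological group admitting a
contractive automorphism is neither compact nor discrete. -/
theorem stmt0 (G : Type*) [Group G] [TopologicalSpace G] [IsTopologicalGroup G]
    [LocallyCompactSpace G] [T2Space G] [Nontrivial G]
    (α : MulAut G) (hc : Continuous α) (hc' : Continuous α.symm)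
    (hcontr : ∀ x : G, Tendsto (fun n : ℕ => (α ^ n) x) atTop (𝓝 1)) :
    ¬ CompactSpace G ∧ ¬ DiscreteTopology G := by
  have hcont : ∀ m : ℕ, Continuous ⇑(α ^ m) := by
    intro m
    induction m with
    | zero => simpa using continuous_id
    | succ k ih =>
      have h : ⇑(α ^ (k + 1)) = ⇑(α ^ k) ∘ ⇑α := by
        ext y; simp [pow_succ]
      rw [h]; exact ih.comp hc
  obtain ⟨x, hx⟩ := exists_ne (1 : G)
  constructor
  · intro hcomp
    -- W := {x}ᶜ is an open neighborhood of 1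
    have hWnhds : ({x}ᶜ : Set G) ∈ 𝓝 (1 : G) :=
      isOpen_compl_singleton.mem_nhds (by simpa using hx.symm)
    -- W₁ with W₁ * W₁ ⊆ {x}ᶜ
    obtain ⟨W₁, hW₁o, hW₁1, hW₁mul⟩ := exists_open_nhds_one_mul_subset hWnhds
    have hW₁nhds : W₁ ∈ 𝓝 (1 : G) := hW₁o.mem_nhds hW₁1
    -- V with v / w ∈ W₁ for v, w ∈ V
    obtain ⟨V, hVnhds, hVdiv⟩ := exists_nhds_split_inv hW₁nhds
    -- closed C ⊆ V, C ∈ 𝓝 1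
    obtain ⟨C, hCnhds, hCclosed, hCV⟩ := exists_mem_nhds_isClosed_subset hVnhds
    -- Baire category argument
    set F : ℕ → Set G := fun n => {y | ∀ m, n ≤ m → (α ^ m) y ∈ C} with hF
    have hFclosed : ∀ n, IsClosed (F n) := by
      intro n
      have h : F n = ⋂ (m : ℕ) (_ : n ≤ m), (⇑(α ^ m)) ⁻¹' C := by
        ext y; simp [hF]
      rw [h]
      exact isClosed_iInter fun m => isClosed_iInter fun _ => hCclosed.preimage (hcont m)
    have hFunion : (⋃ n, F n) = univ := by
      ext y
      simp only [mem_iUnion, mem_univ, iff_true]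
      obtain ⟨n, hn⟩ := eventually_atTop.1 ((hcontr y).eventually hCnhds)
      exact ⟨n, fun m hm => hn m hm⟩
    obtain ⟨n, y₀, hy₀⟩ := nonempty_interior_of_iUnion_of_closed hFclosed hFunion
    -- N : open nbhd of 1
    set N : Set G := {z : G | z * y₀ ∈ interior (F n)} with hN
    have hNopen : IsOpen N := isOpen_interior.preimage (continuous_mul_right y₀)
    have hN1 : (1 : G) ∈ N := by simpa [hN] using hy₀
    have hy₀F : y₀ ∈ F n := interior_subset hy₀
    have key : ∀ z ∈ N, ∀ m, n ≤ m → (α ^ m) z ∈ W₁ := by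
      intro z hz m hm
      have h1 : (α ^ m) (z * y₀) ∈ C := (interior_subset hz) m hm
      have h2 : (α ^ m) y₀ ∈ C := hy₀F m hm
      have h3 : (α ^ m) (z * y₀) / (α ^ m) y₀ ∈ W₁ := hVdiv _ (hCV h1) _ (hCV h2)
      have h4 : (α ^ m) (z * y₀) / (α ^ m) y₀ = (α ^ m) z := by
        rw [map_mul, mul_div_cancel_right]
      rwa [h4] at h3
    -- compactness: cover by translates of N
    have hcover : (univ : Set G) ⊆ ⋃ g : G, (fun y => g⁻¹ * y) ⁻¹' N := by
      intro y _
      refine mem_iUnion.2 ⟨y, ?_⟩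
      simpa using hN1
    obtain ⟨s, hs⟩ := isCompact_univ.elim_finite_subcover
      (fun g : G => (fun y => g⁻¹ * y) ⁻¹' N)
      (fun g => hNopen.preimage (continuous_mul_left g⁻¹)) hcover
    -- for each g, eventually (α ^ m) g ∈ W₁
    have hφ : ∀ g : G, ∃ k : ℕ, ∀ m, k ≤ m → (α ^ m) g ∈ W₁ := by
      intro g
      exact eventually_atTop.1 ((hcontr g).eventually hW₁nhds)
    choose φ hφ' using hφ
    set M : ℕ := max n (s.sup φ) with hM
    -- derive contradiction with x
    set y : G := (α ^ M).symm x with hy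
    have hxy : (α ^ M) y = x := MulEquiv.apply_symm_apply _ _
    have hymem : y ∈ ⋃ g ∈ s, (fun z => g⁻¹ * z) ⁻¹' N := hs (mem_univ y)
    obtain ⟨g, hgs, hgy⟩ := by simpa using hymem
    have hgW : (α ^ M) g ∈ W₁ := hφ' g M (le_trans (Finset.le_sup hgs) (le_max_right _ _))
    have hzW : (α ^ M) (g⁻¹ * y) ∈ W₁ := key _ hgy M (le_max_left _ _)
    have : (α ^ M) y ∈ W₁ * W₁ := by
      have : (α ^ M) y = (α ^ M) g * (α ^ M) (g⁻¹ * y) := by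
        rw [← map_mul]; group
      rw [this]
      exact Set.mul_mem_mul hgW hzW
    have := hW₁mul this
    rw [hxy] at this
    exact this rfl
  · intro hdisc
    have h1 : ({1} : Set G) ∈ 𝓝 (1 : G) := by
      simp [nhds_discrete]
    have := (hcontr x).eventually h1
    obtain ⟨n, hn⟩ := this.exists
    have h2 : (α ^ n) x = (α ^ n) 1 := by
      simpa using Set.mem_singleton_iff.mp hn
    exact hx ((α ^ n).injective h2)
end

section
/- Let G be a totally disconnected locally compact group with a contractive automorphism α, and W ⊆ G a relatively compact open identity neighbourhood. Then {αⁿ(W) : n ∈ ℕ} is a basis of identity neighbourhoods of G, and G = ⋃_{n∈ℕ} α⁻ⁿ(W). In particular G is first countable and σ-compact. -/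
open Filter Topology

section Aux

open Set Pointwise

variable {G : Type*} [Group G] [TopologicalSpace G] [IsTopologicalGroup G]

lemma contPow (β : MulAut G) (h : Continuous β) (n : ℕ) : Continuous ⇑(β ^ n) := by
  induction n with
  | zero => simpa using continuous_id
  | succ n ih => rw [pow_succ, MulAut.coe_mul]; exact ih.comp h

lemma contPowSymm (α : MulAut G) (hc' : Continuous α.symm) (n : ℕ) :
    Continuous ⇑((α ^ n).symm) := by
  have h1 : (α ^ n).symm = (α⁻¹) ^ n := by rw [← MulAut.inv_def, inv_pow]
  rw [h1]
  exact contPow α⁻¹ (by rw [MulAut.inv_def]; exact hc') n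

lemma exist_mul_closure_nhd' {W : Set G} (Wcpt : IsCompact W) (Wopen : IsOpen W) :
    ∃ T ∈ 𝓝 (1 : G), W * T ⊆ W := by
  apply Wcpt.induction_on (p := fun S ↦ ∃ T ∈ 𝓝 (1 : G), S * T ⊆ W)
    ⟨Set.univ, by simp only [univ_mem, empty_mul, empty_subset, and_self]⟩
    (fun _ _ huv ⟨T, hT, mem⟩ ↦ ⟨T, hT, (mul_subset_mul_right huv).trans mem⟩)
    fun U V ⟨T₁, hT₁, mem1⟩ ⟨T₂, hT₂, mem2⟩ ↦ ⟨T₁ ∩ T₂, inter_mem hT₁ hT₂, by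
      rw [union_mul]
      exact union_subset (mul_subset_mul_left inter_subset_left |>.trans mem1)
        (mul_subset_mul_left inter_subset_right |>.trans mem2)⟩
  intro x memW
  have : (x, 1) ∈ (fun p : G × G ↦ p.1 * p.2) ⁻¹' W := by simp [memW]
  rcases isOpen_prod_iff.mp (continuous_mul.isOpen_preimage W Wopen) x 1 this with
    ⟨U, V, Uopen, Vopen, xmemU, onememV, prodsub⟩
  have h6 : U * V ⊆ W := mul_subset_iff.mpr (fun _ hx _ hy ↦ prodsub (mk_mem_prod hx hy))
  exact ⟨U ∩ W, ⟨U, Uopen.mem_nhds xmemU, W, fun _ a ↦ a, rfl⟩,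
    V, IsOpen.mem_nhds Vopen onememV, fun _ a ↦ h6 ((mul_subset_mul_right inter_subset_left) a)⟩

/-- van Dantzig: a compact open subgroup inside any identity neighbourhood. -/
lemma exists_compact_open_subgroup [LocallyCompactSpace G] [T2Space G]
    [TotallyDisconnectedSpace G] {U : Set G} (hU : U ∈ 𝓝 1) :
    ∃ S : Subgroup G, IsOpen (S : Set G) ∧ IsCompact (S : Set G) ∧ (S : Set G) ⊆ U := by
  obtain ⟨K, hKcpt, hKnhds⟩ := exists_compact_mem_nhds (1 : G)
  obtain ⟨U₀, hU₀U, hU₀open, h1U₀⟩ := mem_nhds_iff.mp hU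
  have hO : (interior K ∩ U₀) ∈ 𝓝 (1 : G) :=
    inter_mem (interior_mem_nhds.mpr hKnhds) (hU₀open.mem_nhds h1U₀)
  obtain ⟨C, hCclopen, h1C, hCO⟩ :=
    loc_compact_Haus_tot_disc_of_zero_dim.mem_nhds_iff.mp hO
  have hCK : C ⊆ K := hCO.trans (inter_subset_left.trans interior_subset)
  have hCcpt : IsCompact C := hKcpt.of_isClosed_subset hCclopen.isClosed hCK
  obtain ⟨T, hTnhds, hTmul⟩ := exist_mul_closure_nhd' hCcpt hCclopen.isOpen
  obtain ⟨U₁, hU₁T, hU₁open, h1U₁⟩ := mem_nhds_iff.mp hTnhds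
  set V : Set G := U₁ ∩ U₁⁻¹ with hVdef
  have hVopen : IsOpen V := hU₁open.inter hU₁open.inv
  have h1V : (1 : G) ∈ V := ⟨h1U₁, by simpa using h1U₁⟩
  have hVinv : V⁻¹ = V := by
    rw [hVdef]; ext x; simp [and_comm]
  have hVmul : C * V ⊆ C := fun a ha ↦
    hTmul (mul_subset_mul_left (inter_subset_left.trans hU₁T) ha)
  let S : Subgroup G :=
    { carrier := ⋃ n, V ^ (n + 1)
      mul_mem' := fun ha hb ↦ by
        rcases mem_iUnion.mp ha with ⟨k, hk⟩
        rcases mem_iUnion.mp hb with ⟨l, hl⟩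
        apply mem_iUnion.mpr
        use k + 1 + l
        rw [add_assoc, pow_add]
        exact Set.mul_mem_mul hk hl
      one_mem' := by
        apply mem_iUnion.mpr
        use 0
        simpa using h1V
      inv_mem' := fun ha ↦ by
        rcases mem_iUnion.mp ha with ⟨k, hk⟩
        apply mem_iUnion.mpr
        use k
        rw [← hVinv]
        simpa only [inv_pow, Set.mem_inv, inv_inv] using hk }
  have hSopen : IsOpen ((⋃ n, V ^ (n + 1)) : Set G) := by
    refine isOpen_iUnion fun n ↦ ?_
    rw [pow_succ]
    exact hVopen.mul_left
  have mulVpow (n : ℕ) : C * V ^ (n + 1) ⊆ C := by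
    induction n with
    | zero => simpa using hVmul
    | succ n ih =>
      rw [pow_succ, ← mul_assoc]
      exact (Set.mul_subset_mul_right ih).trans hVmul
  have hpow (n : ℕ) : V ^ (n + 1) ⊆ C * V ^ (n + 1) := fun x xin ↦ by
    rw [Set.mem_mul]
    exact ⟨1, h1C, x, xin, one_mul x⟩
  have hSC : ((⋃ n, V ^ (n + 1)) : Set G) ⊆ C :=
    iUnion_subset fun i a ha ↦ mulVpow i (hpow i ha)
  have hSopen' : IsOpen (S : Set G) := hSopen
  have hSclosed : IsClosed (S : Set G) :=
    OpenSubgroup.isClosed ⟨S, hSopen'⟩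
  refine ⟨S, hSopen', hCcpt.of_isClosed_subset hSclosed hSC, hSC.trans (hCO.trans
    (inter_subset_right.trans hU₀U))⟩

/-- Uniform contraction on compact sets. -/
lemma uniform_contraction [LocallyCompactSpace G] [T2Space G] [TotallyDisconnectedSpace G]
    (α : MulAut G) (hc : Continuous α)
    (hcontr : ∀ x : G, Tendsto (fun n : ℕ => (α ^ n) x) atTop (𝓝 1))
    {U : Set G} (hU : U ∈ 𝓝 1) {K : Set G} (hK : IsCompact K) :
    ∃ N : ℕ, ∀ n ≥ N, ∀ x ∈ K, (α ^ n) x ∈ U := by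
  obtain ⟨V, hVopen, hVcpt, hVU⟩ := exists_compact_open_subgroup hU
  have hVnhds : (V : Set G) ∈ 𝓝 (1 : G) := hVopen.mem_nhds V.one_mem
  have hpt : ∀ x : G, ∃ M : ℕ, ∀ m ≥ M, (α ^ m) x ∈ V := fun x ↦
    eventually_atTop.mp ((hcontr x).eventually hVnhds)
  choose f hf using hpt
  set D : ℕ → Set G := fun n ↦ ⋂ m : ℕ, (fun x ↦ (α ^ (n + m)) x) ⁻¹' (V : Set G) with hDdef
  have hDclosed : ∀ n, IsClosed (D n) := fun n ↦
    isClosed_iInter fun m ↦ hVcpt.isClosed.preimage (contPow α hc (n + m))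
  have hDcover : ⋃ n, D n = Set.univ := by
    apply Set.eq_univ_of_forall
    intro x
    exact mem_iUnion.mpr ⟨f x, mem_iInter.mpr fun m ↦ hf x (f x + m) (Nat.le_add_right _ m)⟩
  obtain ⟨N₀, hN₀⟩ := nonempty_interior_of_iUnion_of_closed hDclosed hDcover
  obtain ⟨x₀, hx₀⟩ := hN₀
  set P : Set G := (fun y ↦ x₀ * y) ⁻¹' interior (D N₀) with hPdef
  have hPopen : IsOpen P := (isOpen_interior).preimage (continuous_mul_left x₀)
  have h1P : (1 : G) ∈ P := by
    simp only [hPdef, Set.mem_preimage, mul_one]; exact hx₀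
  have key : ∀ p ∈ P, ∀ m, max N₀ (f x₀) ≤ m → (α ^ m) p ∈ V := by
    intro p hp m hm
    have hmem : x₀ * p ∈ D N₀ := interior_subset hp
    have h1 : (α ^ m) (x₀ * p) ∈ V := by
      have := mem_iInter.mp hmem (m - N₀)
      rwa [Nat.add_sub_cancel' (le_trans (le_max_left _ _) hm)] at this
    have h2 : (α ^ m) x₀ ∈ V := hf x₀ m (le_trans (le_max_right _ _) hm)
    have h3 : (α ^ m) p = ((α ^ m) x₀)⁻¹ * ((α ^ m) (x₀ * p)) := by
      rw [map_mul]; group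
    rw [h3]
    exact V.mul_mem (V.inv_mem h2) h1
  set Q : G → Set G := fun x ↦ (fun y ↦ x⁻¹ * y) ⁻¹' P with hQdef
  have hQopen : ∀ x, IsOpen (Q x) := fun x ↦ hPopen.preimage (continuous_mul_left x⁻¹)
  have hQcover : K ⊆ ⋃ x : G, Q x := fun y _ ↦
    mem_iUnion.mpr ⟨y, by simp only [hQdef, Set.mem_preimage, inv_mul_cancel]; exact h1P⟩
  obtain ⟨t, ht⟩ := hK.elim_finite_subcover Q hQopen hQcover
  refine ⟨max (max N₀ (f x₀)) (t.sup f), fun n hn y hy ↦ ?_⟩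
  obtain ⟨x, hxt, hyQ⟩ := mem_iUnion₂.mp (ht hy)
  have h1 : (α ^ n) x ∈ V :=
    hf x n (le_trans (le_trans (Finset.le_sup hxt) (le_max_right _ _)) hn)
  have h2 : (α ^ n) (x⁻¹ * y) ∈ V := key _ hyQ n (le_trans (le_max_left _ _) hn)
  have h3 : y = x * (x⁻¹ * y) := by group
  rw [h3, map_mul]
  exact hVU (V.mul_mem h1 h2)

end Aux

/-- For a contractive automorphism `α` of a totally disconnected locally compact
group `G` and a relatively compact open identity neighbourhood `W`, the sets
`αⁿ(W)` form a basis of identity neighbourhoods, `G = ⋃ₙ α⁻ⁿ(W)`, and `G` is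
first countable and σ-compact. -/
theorem stmt1 (G : Type*) [Group G] [TopologicalSpace G] [IsTopologicalGroup G]
    [LocallyCompactSpace G] [T2Space G] [TotallyDisconnectedSpace G]
    (α : MulAut G) (hc : Continuous α) (hc' : Continuous α.symm)
    (hcontr : ∀ x : G, Tendsto (fun n : ℕ => (α ^ n) x) atTop (𝓝 1))
    (W : Set G) (hWopen : IsOpen W) (hW1 : (1 : G) ∈ W)
    (hWcpt : IsCompact (closure W)) :
    (𝓝 (1 : G)).HasBasis (fun _ : ℕ => True) (fun n => (α ^ n : MulAut G) '' W) ∧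
    (⋃ n : ℕ, (fun x => (α ^ n) x) ⁻¹' W) = Set.univ ∧
    FirstCountableTopology G ∧ SigmaCompactSpace G := by
  -- each αⁿ is a homeomorphism
  have hopenmap : ∀ n : ℕ, IsOpenMap ⇑(α ^ n) := fun n ↦
    (Homeomorph.mk (α ^ n).toEquiv (contPow α hc n) (contPowSymm α hc' n)).isOpenMap
  -- the basis
  have hbasis : (𝓝 (1 : G)).HasBasis (fun _ : ℕ => True)
      (fun n => (α ^ n : MulAut G) '' W) := by
    constructor
    intro t
    constructor
    · intro ht
      obtain ⟨U₀, hsub, hopen, h1⟩ := mem_nhds_iff.mp ht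
      obtain ⟨N, hN⟩ := uniform_contraction α hc hcontr (hopen.mem_nhds h1) hWcpt
      refine ⟨N, trivial, ?_⟩
      rintro _ ⟨x, hx, rfl⟩
      exact hsub (hN N le_rfl x (subset_closure hx))
    · rintro ⟨n, -, hsub⟩
      exact mem_nhds_iff.mpr ⟨(α ^ n : MulAut G) '' W, hsub, hopenmap n W hWopen,
        ⟨1, hW1, map_one _⟩⟩
  -- the covering
  have hcover : (⋃ n : ℕ, (fun x => (α ^ n) x) ⁻¹' W) = Set.univ := by
    apply Set.eq_univ_of_forall
    intro x
    obtain ⟨n, hn⟩ := ((hcontr x).eventually (hWopen.mem_nhds hW1)).exists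
    exact Set.mem_iUnion.mpr ⟨n, hn⟩
  refine ⟨hbasis, hcover, ?_, ?_⟩
  · -- first countable
    constructor
    intro a
    have hmap := hbasis.map (fun x : G => a * x)
    rw [map_mul_left_nhds_one a] at hmap
    exact hmap.isCountablyGenerated
  · -- sigma compact
    refine ⟨⟨fun n => (fun x => (α ^ n) x) ⁻¹' closure W, fun n => ?_, ?_⟩⟩
    · have heq : (fun x => (α ^ n) x) ⁻¹' closure W = ⇑((α ^ n).symm) '' closure W := by
        ext y
        constructor
        · intro h
          exact ⟨(α ^ n) y, h, (α ^ n).symm_apply_apply y⟩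
        · rintro ⟨z, hz, rfl⟩
          simpa [MulEquiv.apply_symm_apply] using hz
      show IsCompact ((fun x => (α ^ n) x) ⁻¹' closure W)
      rw [heq]
      exact hWcpt.image (contPowSymm α hc' n)
    · apply Set.eq_univ_of_univ_subset
      rw [← hcover]
      exact Set.iUnion_mono fun n => Set.preimage_mono subset_closure
end

section
/- Let G be a totally disconnected locally compact group with a contractive automorphism α. Then the module Δ_G(α⁻¹) is an integer ≥ 2, provided G ≠ 1. More precisely, for a compact open subgroup W with α(W) ⊆ W, Δ_G(α⁻¹) = [α⁻¹(W) : W], and this index is > 1. -/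
open Filter Topology MeasureTheory Pointwise

private lemma coe_pow_mulAut {G : Type*} [Group G] (α : MulAut G) (n : ℕ) :
    ⇑(α ^ (n + 1)) = ⇑(α ^ n) ∘ ⇑α := by
  ext x
  simp [pow_succ]

/-- A contractive automorphism of a nontrivial compact t.d. group forces the group trivial. -/
private lemma aux_contract_compact {G : Type*} [Group G] [TopologicalSpace G]
    [IsTopologicalGroup G] [CompactSpace G] [T2Space G] [TotallyDisconnectedSpace G]
    (α : MulAut G) (hc : Continuous α)
    (hcontr : ∀ x : G, Tendsto (fun n : ℕ => (α ^ n) x) atTop (𝓝 1)) (x : G) : x = 1 := by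
  by_contra hx
  haveI : TotallySeparatedSpace G := loc_compact_t2_tot_disc_iff_tot_sep.mp ‹_›
  obtain ⟨U, hUclopen, h1U, hxU⟩ :=
    exists_isClopen_of_totally_separated (show (1 : G) ≠ x from fun h => hx h.symm)
  obtain ⟨N, hNU⟩ := IsTopologicalGroup.exist_openSubgroup_sub_clopen_nhds_of_one hUclopen h1U
  have hcn : ∀ n : ℕ, Continuous ⇑(α ^ n) := by
    intro n
    induction n with
    | zero =>
        have h0 : ⇑(α ^ 0) = id := by ext g; simp
        rw [h0]; exact continuous_id
    | succ n ih => rw [coe_pow_mulAut]; exact ih.comp hc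
  let C : ℕ → Subgroup G := fun n => N.toSubgroup.comap (α ^ n : MulAut G).toMonoidHom
  let Hm : ℕ → Subgroup G := fun m => ⨅ n : {n : ℕ // m ≤ n}, C (n : ℕ)
  have hmem : ∀ (m : ℕ) (g : G), g ∈ Hm m ↔ ∀ n, m ≤ n → (α ^ n) g ∈ N := by
    intro m g
    simp [Hm, C, Subgroup.mem_iInf, Subgroup.mem_comap, Subtype.forall]
  have hclosed : ∀ m, IsClosed ((Hm m : Subgroup G) : Set G) := by
    intro m
    have h1 : ((Hm m : Subgroup G) : Set G) = ⋂ n : {n : ℕ // m ≤ n}, ((C (n : ℕ) : Subgroup G) : Set G) := by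
      simp [Hm]
    rw [h1]
    exact isClosed_iInter fun n => N.isClosed.preimage (hcn (n : ℕ))
  have hcover : ∀ g : G, ∃ m, g ∈ Hm m := by
    intro g
    have h1 : (↑N : Set G) ∈ 𝓝 (1 : G) := N.isOpen.mem_nhds (one_mem _)
    have h2 : ∀ᶠ n in atTop, (α ^ n) g ∈ (N : Set G) := (hcontr g).eventually_mem h1
    obtain ⟨m, hm⟩ := eventually_atTop.mp h2
    exact ⟨m, (hmem m g).mpr hm⟩
  obtain ⟨m₀, g₀, hg₀⟩ := nonempty_interior_of_iUnion_of_closed hclosed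
      (Set.eq_univ_iff_forall.mpr fun g => Set.mem_iUnion.mpr (hcover g))
  have hopen₀ : IsOpen ((Hm m₀ : Subgroup G) : Set G) :=
    Subgroup.isOpen_of_mem_nhds _ (mem_interior_iff_mem_nhds.mp hg₀)
  have hmono : ∀ {m m' : ℕ}, m ≤ m' → Hm m ≤ Hm m' := by
    intro m m' h
    refine le_iInf fun n => ?_
    exact iInf_le_of_le ⟨(n : ℕ), h.trans n.2⟩ le_rfl
  have hcover2 : (Set.univ : Set G) ⊆ ⋃ m : ℕ, ((Hm (max m m₀) : Subgroup G) : Set G) := by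
    intro g _
    obtain ⟨m, hm⟩ := hcover g
    exact Set.mem_iUnion.mpr ⟨m, hmono (le_max_left m m₀) hm⟩
  obtain ⟨t, ht⟩ := isCompact_univ.elim_finite_subcover
    (fun m : ℕ => ((Hm (max m m₀) : Subgroup G) : Set G))
    (fun m : ℕ => Subgroup.isOpen_mono (hmono (le_max_right m m₀)) hopen₀) hcover2
  set M : ℕ := max (t.sup id) m₀ with hM
  have hGM : ∀ g : G, g ∈ Hm M := by
    intro g
    obtain ⟨m, hmt, hgm⟩ := Set.mem_iUnion₂.mp (ht (Set.mem_univ g))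
    exact hmono (max_le_max (Finset.le_sup (f := id) hmt) le_rfl) hgm
  have hxN : x ∈ N := by
    have h3 := (hmem M ((α ^ M).symm x)).mp (hGM _) M le_rfl
    rwa [MulEquiv.apply_symm_apply] at h3
  exact hxU (hNU hxN)

/-- The module of the inverse of a contractive automorphism of a nontrivial
totally disconnected locally compact group is an integer `≥ 2`; more precisely,
for a compact open subgroup `W` with `α(W) ⊆ W` it equals the index
`[α⁻¹(W) : W]`, which is `> 1`. -/
theorem stmt2 (G : Type*) [Group G] [TopologicalSpace G] [IsTopologicalGroup G]
    [LocallyCompactSpace G] [T2Space G] [TotallyDisconnectedSpace G] [Nontrivial G]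
    [MeasurableSpace G] [BorelSpace G]
    (α : MulAut G) (hc : Continuous α) (hc' : Continuous α.symm)
    (hcontr : ∀ x : G, Tendsto (fun n : ℕ => (α ^ n) x) atTop (𝓝 1))
    (W : Subgroup G) (hWopen : IsOpen (W : Set G)) (hWcpt : IsCompact (W : Set G))
    (hWinv : ∀ x ∈ W, α x ∈ W)
    (μ : Measure G) [μ.IsHaarMeasure] :
    ∃ Δ : ℕ, 2 ≤ Δ ∧ Δ = W.relIndex (W.comap α.toMonoidHom) ∧
      ∀ U : Set G, IsOpen U → U.Nonempty → IsCompact (closure U) →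
        μ ((⇑α) ⁻¹' U) = (Δ : ENNReal) * μ U := by
  classical
  set H : Subgroup G := W.comap α.toMonoidHom with hHdef
  have hWH : W ≤ H := fun g hg => Subgroup.mem_comap.mpr (hWinv g hg)
  have hHcpt : IsCompact (H : Set G) := by
    have himg : (H : Set G) = ⇑α.symm '' (W : Set G) := by
      ext g
      constructor
      · intro hg
        exact ⟨α g, hg, α.symm_apply_apply g⟩
      · rintro ⟨w, hw, rfl⟩
        show α (α.symm w) ∈ W
        rwa [MulEquiv.apply_symm_apply]
    rw [himg]; exact hWcpt.image hc'
  haveI : CompactSpace H := isCompact_iff_compactSpace.mp hHcpt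
  set K : Subgroup H := W.subgroupOf H with hKdef
  have hKopen : IsOpen (K : Set H) := Subgroup.subgroupOf_isOpen H W hWopen
  haveI hQfin : Finite (H ⧸ K) := Subgroup.quotient_finite_of_isOpen K hKopen
  haveI hKfi : K.FiniteIndex := K.finiteIndex_of_finite_quotient
  set Δ : ℕ := W.relIndex H with hΔdef
  have hΔindex : Δ = K.index := rfl
  -- Δ ≠ 1
  have hΔ1 : Δ ≠ 1 := by
    intro h1
    have hHW : H ≤ W := Subgroup.relIndex_eq_one.mp h1
    have hHeq : H = W := le_antisymm hHW hWH
    have hdown : ∀ n : ℕ, ∀ g : G, (α ^ n) g ∈ W → g ∈ W := by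
      intro n
      induction n with
      | zero => intro g hg; simpa using hg
      | succ n ih =>
          intro g hg
          have hg' : (α ^ n) (α g) ∈ W := by
            have := congrFun (coe_pow_mulAut α n) g
            rw [this] at hg
            exact hg
          have hag : α g ∈ W := ih (α g) hg'
          have hgH : g ∈ H := Subgroup.mem_comap.mpr hag
          rwa [hHeq] at hgH
    have hWuniv : ∀ g : G, g ∈ W := by
      intro g
      have h1' : (W : Set G) ∈ 𝓝 (1 : G) := hWopen.mem_nhds (one_mem _)
      obtain ⟨n, hn⟩ := ((hcontr g).eventually_mem h1').exists
      exact hdown n g hn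
    haveI : CompactSpace G := by
      constructor
      rw [show (Set.univ : Set G) = (W : Set G) from
        (Set.eq_univ_iff_forall.mpr hWuniv).symm]
      exact hWcpt
    obtain ⟨x, hx⟩ := exists_ne (1 : G)
    exact hx (aux_contract_compact α hc hcontr x)
  have hΔ0 : Δ ≠ 0 := by rw [hΔindex]; exact hKfi.index_ne_zero
  have hΔ2 : 2 ≤ Δ := by omega
  -- coset decomposition of α⁻¹(W)
  have hWclosed : IsClosed (W : Set G) := hWcpt.isClosed
  have hWmeas : MeasurableSet (W : Set G) := hWclosed.measurableSet
  let rep : H ⧸ K → G := fun q => ((Quotient.out q : H) : G)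
  have hrep : ∀ q, rep q ∈ H := fun q => (Quotient.out q).2
  have hdecomp : (⇑α ⁻¹' (W : Set G)) = ⋃ q : H ⧸ K, rep q • (W : Set G) := by
    ext g
    constructor
    · intro hg
      have hgH : g ∈ H := Subgroup.mem_comap.mpr hg
      set q : H ⧸ K := QuotientGroup.mk (⟨g, hgH⟩ : H) with hq
      refine Set.mem_iUnion.mpr ⟨q, ?_⟩
      rw [Set.mem_smul_set_iff_inv_smul_mem]
      have houtq : (QuotientGroup.mk (Quotient.out q) : H ⧸ K)
          = QuotientGroup.mk (⟨g, hgH⟩ : H) := QuotientGroup.out_eq' q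
      have hK' : (Quotient.out q)⁻¹ * (⟨g, hgH⟩ : H) ∈ K := QuotientGroup.eq.mp houtq
      have hmem' := Subgroup.mem_subgroupOf.mp hK'
      simpa [rep, smul_eq_mul] using hmem'
    · intro hg
      obtain ⟨q, hq⟩ := Set.mem_iUnion.mp hg
      obtain ⟨w, hw, rfl⟩ := hq
      have : rep q * w ∈ H := mul_mem (hrep q) (hWH hw)
      exact Subgroup.mem_comap.mp this
  have hdisj : Pairwise (Function.onFun Disjoint fun q : H ⧸ K => rep q • (W : Set G)) := by
    intro q q' hqq'
    rw [Function.onFun, Set.disjoint_left]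
    intro g hgq hgq'
    rw [Set.mem_smul_set_iff_inv_smul_mem] at hgq hgq'
    apply hqq'
    have hmemK : (Quotient.out q)⁻¹ * Quotient.out q' ∈ K := by
      apply Subgroup.mem_subgroupOf.mpr
      have hco : (((Quotient.out q)⁻¹ * Quotient.out q' : H) : G)
          = (rep q)⁻¹ * rep q' := rfl
      rw [hco]
      have hkey : (rep q)⁻¹ * rep q' = ((rep q)⁻¹ * g) * (g⁻¹ * rep q') := by group
      rw [hkey]
      have h2 : g⁻¹ * rep q' ∈ W := by
        have := W.inv_mem hgq'
        simpa [smul_eq_mul, mul_inv_rev] using this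
      exact W.mul_mem (by simpa [smul_eq_mul] using hgq) h2
    have heq : (QuotientGroup.mk (Quotient.out q) : H ⧸ K)
        = QuotientGroup.mk (Quotient.out q') := QuotientGroup.eq.mpr hmemK
    rwa [QuotientGroup.out_eq', QuotientGroup.out_eq'] at heq
  have hcosetmeas : ∀ q : H ⧸ K, MeasurableSet (rep q • (W : Set G)) := by
    intro q
    have : rep q • (W : Set G) = ((rep q)⁻¹ * ·) ⁻¹' (W : Set G) := by
      ext g
      simp [Set.mem_smul_set_iff_inv_smul_mem, smul_eq_mul]
    rw [this]
    exact hWmeas.preimage (measurable_const_mul _)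
  haveI : Countable (H ⧸ K) := Finite.to_countable
  haveI : Fintype (H ⧸ K) := Fintype.ofFinite _
  have hμW : μ (⇑α ⁻¹' (W : Set G)) = (Δ : ENNReal) * μ (W : Set G) := by
    rw [hdecomp, measure_iUnion hdisj hcosetmeas]
    have hsm : ∀ q : H ⧸ K, μ (rep q • (W : Set G)) = μ (W : Set G) := fun q =>
      measure_smul μ (rep q) _
    rw [tsum_congr hsm, tsum_fintype]
    rw [Finset.sum_const, hΔindex, Subgroup.index, Nat.card_eq_fintype_card]
    simp [nsmul_eq_mul, Finset.card_univ]
  -- Haar uniqueness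
  set ν : Measure G := μ.map ⇑α with hνdef
  haveI hνHaar : ν.IsHaarMeasure := α.isHaarMeasure_map μ hc hc'
  set c : NNReal := Measure.haarScalarFactor ν μ with hcdef
  have hνeq : ∀ s : Set G, IsCompact (closure s) → ν s = (c : ENNReal) * μ s := by
    intro s hs
    have := Measure.measure_isMulInvariant_eq_smul_of_isCompact_closure ν μ hs
    rw [ENNReal.smul_def] at this; exact this
  have hνapply : ∀ s : Set G, MeasurableSet s → ν s = μ (⇑α ⁻¹' s) := by
    intro s hs
    rw [hνdef, Measure.map_apply hc.measurable hs]
  have hcΔ : (c : ENNReal) = (Δ : ENNReal) := by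
    have h1 : ν (W : Set G) = (c : ENNReal) * μ (W : Set G) :=
      hνeq _ (by rwa [hWclosed.closure_eq])
    rw [hνapply _ hWmeas, hμW] at h1
    have hμW0 : μ (W : Set G) ≠ 0 :=
      (hWopen.measure_pos μ ⟨1, one_mem W⟩).ne'
    have hμWtop : μ (W : Set G) ≠ ⊤ := hWcpt.measure_lt_top.ne
    exact ((ENNReal.mul_left_inj hμW0 hμWtop).mp h1).symm
  refine ⟨Δ, hΔ2, rfl, ?_⟩
  intro U hUopen _hUne hUcl
  have := hνeq U hUcl
  rw [hνapply U hUopen.measurableSet, hcΔ] at this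
  exact this
end

section
/- Let G be a totally disconnected locally compact group, α a contractive automorphism, and H ⊆ G a closed subgroup with α(H) ⊆ H. Then S := ⋃_{n∈ℕ} α⁻ⁿ(H) is a closed α-stable subgroup of G, and H is open in S. Moreover if H is normal in G then S is normal in G. -/
open Filter Topology Pointwise

section Stmt3Aux

variable {G : Type*} [Group G] [TopologicalSpace G] [IsTopologicalGroup G]

private lemma stmt3_pow_succ_apply (α : MulAut G) (n : ℕ) (x : G) :
    (α ^ (n + 1)) x = (α ^ n) (α x) := by rw [pow_succ]; rfl

private lemma stmt3_pow_succ_apply' (α : MulAut G) (n : ℕ) (x : G) :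
    (α ^ (n + 1)) x = α ((α ^ n) x) := by rw [pow_succ']; rfl

private lemma stmt3_pow_add_apply (α : MulAut G) (j m : ℕ) (x : G) :
    (α ^ j) ((α ^ m) x) = (α ^ (j + m)) x := by rw [pow_add]; rfl

private lemma stmt3_contPow (α : MulAut G) (hc : Continuous α) :
    ∀ n : ℕ, Continuous fun x : G => (α ^ n) x
  | 0 => by
      have : (fun x : G => (α ^ 0) x) = id := funext fun x => by rw [pow_zero]; rfl
      rw [this]; exact continuous_id
  | (n + 1) => by
      have : (fun x : G => (α ^ (n + 1)) x) = (fun x : G => (α ^ n) x) ∘ fun x : G => α x :=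
        funext fun x => stmt3_pow_succ_apply α n x
      rw [this]; exact (stmt3_contPow α hc n).comp hc

private lemma stmt3_contPowSymm (α : MulAut G) (hc' : Continuous α.symm) :
    ∀ n : ℕ, Continuous fun x : G => (α ^ n).symm x
  | 0 => by
      have : (fun x : G => (α ^ 0).symm x) = id := funext fun x => by rw [pow_zero]; rfl
      rw [this]; exact continuous_id
  | (n + 1) => by
      have : (fun x : G => (α ^ (n + 1)).symm x)
          = (fun x : G => α.symm x) ∘ fun x : G => (α ^ n).symm x :=
        funext fun x => by rw [pow_succ]; rfl
      rw [this]; exact hc'.comp (stmt3_contPowSymm α hc' n)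

/-- van Dantzig: every neighbourhood of 1 contains a compact open subgroup. -/
private lemma stmt3_vanDantzig [LocallyCompactSpace G] [T2Space G] [TotallyDisconnectedSpace G]
    {W : Set G} (hW : W ∈ 𝓝 (1 : G)) :
    ∃ V : Subgroup G, IsCompact (V : Set G) ∧ IsOpen (V : Set G) ∧ (V : Set G) ⊆ W := by
  obtain ⟨U, hUW, hUopen, h1U⟩ := mem_nhds_iff.mp hW
  obtain ⟨K, hKcomp, hKint, hKU⟩ := exists_compact_subset hUopen h1U
  obtain ⟨L, hLclopen, h1L, hLK⟩ :=
    loc_compact_Haus_tot_disc_of_zero_dim.mem_nhds_iff.mp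
      (isOpen_interior.mem_nhds hKint)
  have hLcomp : IsCompact L :=
    hKcomp.of_isClosed_subset hLclopen.1 (hLK.trans interior_subset)
  obtain ⟨T, hTnhds, hLT⟩ :=
    compact_open_separated_mul_right hLcomp hLclopen.2 (subset_refl L)
  have hTL : T ⊆ L := fun t ht => by
    have : (1 : G) * t ∈ L := hLT (Set.mul_mem_mul h1L ht)
    simpa using this
  obtain ⟨T₀, hT₀T, hT₀open, h1T₀⟩ := mem_nhds_iff.mp hTnhds
  set Vs : Set G := T₀ ∩ T₀⁻¹ with hVs
  have hVsopen : IsOpen Vs := hT₀open.inter hT₀open.inv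
  have h1Vs : (1 : G) ∈ Vs := ⟨h1T₀, by simpa using h1T₀⟩
  have hVsinv : Vs⁻¹ = Vs := by
    simp [hVs, Set.inter_inv, Set.inter_comm]
  have hVsT : Vs ⊆ T := fun x hx => hT₀T hx.1
  have hLVs : L * Vs ⊆ L := (Set.mul_subset_mul_left hVsT).trans hLT
  have hpow : ∀ n : ℕ, Vs ^ (n + 1) ⊆ L := by
    intro n
    induction n with
    | zero => simpa using (hVsT.trans hTL)
    | succ n ih =>
        calc Vs ^ (n + 1 + 1) = Vs ^ (n + 1) * Vs := by rw [pow_succ]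
        _ ⊆ L * Vs := Set.mul_subset_mul_right ih
        _ ⊆ L := hLVs
  refine ⟨{ carrier := ⋃ n : ℕ, Vs ^ (n + 1)
            mul_mem' := ?_
            one_mem' := ?_
            inv_mem' := ?_ }, ?_, ?_, ?_⟩
  · intro a b ha hb
    rcases Set.mem_iUnion.mp ha with ⟨k, hk⟩
    rcases Set.mem_iUnion.mp hb with ⟨l, hl⟩
    apply Set.mem_iUnion.mpr
    refine ⟨k + 1 + l, ?_⟩
    rw [add_assoc, pow_add]
    exact Set.mul_mem_mul hk hl
  · exact Set.mem_iUnion.mpr ⟨0, by simpa using h1Vs⟩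
  · intro a ha
    rcases Set.mem_iUnion.mp ha with ⟨k, hk⟩
    apply Set.mem_iUnion.mpr
    refine ⟨k, ?_⟩
    rw [← hVsinv]
    simpa only [inv_pow, Set.mem_inv, inv_inv] using hk
  · -- compact
    have hopen : IsOpen (⋃ n : ℕ, Vs ^ (n + 1)) := by
      refine isOpen_iUnion fun n => ?_
      rw [pow_succ]
      exact hVsopen.mul_left
    have hsubK : (⋃ n : ℕ, Vs ^ (n + 1)) ⊆ K := by
      refine Set.iUnion_subset fun n => (hpow n).trans (hLK.trans interior_subset)
    have hclosed : IsClosed (⋃ n : ℕ, Vs ^ (n + 1)) := by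
      have := Subgroup.isClosed_of_isOpen
        { carrier := ⋃ n : ℕ, Vs ^ (n + 1)
          mul_mem' := fun {a b} ha hb => by
            rcases Set.mem_iUnion.mp ha with ⟨k, hk⟩
            rcases Set.mem_iUnion.mp hb with ⟨l, hl⟩
            apply Set.mem_iUnion.mpr
            refine ⟨k + 1 + l, ?_⟩
            rw [add_assoc, pow_add]
            exact Set.mul_mem_mul hk hl
          one_mem' := Set.mem_iUnion.mpr ⟨0, by simpa using h1Vs⟩
          inv_mem' := fun {a} ha => by
            rcases Set.mem_iUnion.mp ha with ⟨k, hk⟩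
            apply Set.mem_iUnion.mpr
            refine ⟨k, ?_⟩
            rw [← hVsinv]
            simpa only [inv_pow, Set.mem_inv, inv_inv] using hk } hopen
      exact this
    exact hKcomp.of_isClosed_subset hclosed hsubK
  · refine isOpen_iUnion fun n => ?_
    rw [pow_succ]
    exact hVsopen.mul_left
  · refine Set.iUnion_subset fun n => (hpow n).trans ?_
    exact (hLK.trans interior_subset).trans (hKU.trans hUW)

/-- Uniform contraction on compact sets (Baire category argument). -/
private lemma stmt3_unifContr [LocallyCompactSpace G] [T2Space G]
    (α : MulAut G) (hc : Continuous α)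
    (hcontr : ∀ x : G, Tendsto (fun n : ℕ => (α ^ n) x) atTop (𝓝 1))
    {C : Set G} (hC : IsCompact C) (U : Subgroup G) (hUo : IsOpen (U : Set G)) :
    ∃ M : ℕ, ∀ m : ℕ, M ≤ m → ∀ x ∈ C, (α ^ m) x ∈ U := by
  classical
  have hUcl : IsClosed (U : Set G) := Subgroup.isClosed_of_isOpen U hUo
  set Vn : ℕ → Subgroup G := fun n =>
    { carrier := { x : G | ∀ m : ℕ, n ≤ m → (α ^ m) x ∈ U }
      mul_mem' := fun {a b} ha hb m hm => by
        rw [map_mul]; exact U.mul_mem (ha m hm) (hb m hm)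
      one_mem' := fun m _ => by rw [map_one]; exact U.one_mem
      inv_mem' := fun {a} ha m hm => by
        rw [map_inv]; exact U.inv_mem (ha m hm) } with hVndef
  have hVnmem : ∀ n x, x ∈ Vn n ↔ ∀ m : ℕ, n ≤ m → (α ^ m) x ∈ U := fun n x => Iff.rfl
  have hVncl : ∀ n, IsClosed (Vn n : Set G) := by
    intro n
    have : (Vn n : Set G) = ⋂ m : ℕ, ⋂ (_ : n ≤ m), (fun x : G => (α ^ m) x) ⁻¹' (U : Set G) := by
      ext x
      simp only [Set.mem_iInter, Set.mem_preimage, SetLike.mem_coe, hVnmem]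
    rw [this]
    exact isClosed_iInter fun m => isClosed_iInter fun _ =>
      hUcl.preimage (stmt3_contPow α hc m)
  have hVnmono : ∀ {n n' : ℕ}, n ≤ n' → (Vn n : Set G) ⊆ (Vn n' : Set G) := by
    intro n n' hnn x hx m hm
    exact hx m (hnn.trans hm)
  have hcover : ⋃ n : ℕ, (Vn n : Set G) = Set.univ := by
    refine Set.eq_univ_of_forall fun x => ?_
    have := (hcontr x).eventually (hUo.mem_nhds U.one_mem)
    rcases eventually_atTop.mp this with ⟨N, hN⟩
    exact Set.mem_iUnion.mpr ⟨N, fun m hm => hN m hm⟩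
  obtain ⟨N, g, hg⟩ := nonempty_interior_of_iUnion_of_closed hVncl hcover
  have hVNopen : IsOpen (Vn N : Set G) := by
    refine Subgroup.isOpen_of_mem_nhds (Vn N) (g := g) ?_
    exact mem_interior_iff_mem_nhds.mp hg
  have hVnopen : ∀ k : ℕ, IsOpen (Vn (N + k) : Set G) := by
    intro k
    refine Subgroup.isOpen_of_mem_nhds (Vn (N + k)) (g := (1 : G)) ?_
    exact Filter.mem_of_superset (hVNopen.mem_nhds (Vn N).one_mem)
      (hVnmono (Nat.le_add_right N k))
  have hCcover : C ⊆ ⋃ k : ℕ, (Vn (N + k) : Set G) := by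
    intro x _
    have hx : x ∈ ⋃ n : ℕ, (Vn n : Set G) := by rw [hcover]; trivial
    rcases Set.mem_iUnion.mp hx with ⟨n, hn⟩
    exact Set.mem_iUnion.mpr ⟨n, hVnmono (Nat.le_add_left n N) hn⟩
  obtain ⟨t, ht⟩ := hC.elim_finite_subcover (fun k : ℕ => (Vn (N + k) : Set G))
    hVnopen hCcover
  refine ⟨N + t.sup id, fun m hm x hx => ?_⟩
  rcases Set.mem_iUnion₂.mp (ht hx) with ⟨k, hkt, hxk⟩
  have hk : N + k ≤ N + t.sup id := Nat.add_le_add_left (Finset.le_sup (f := id) hkt) N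
  have : x ∈ Vn (N + t.sup id) := hVnmono hk hxk
  exact this m hm

/-- Existence of a "tidy" compact open subgroup: `α`-invariant, and uniformly contracted. -/
private lemma stmt3_tidy [LocallyCompactSpace G] [T2Space G] [TotallyDisconnectedSpace G]
    (α : MulAut G) (hc : Continuous α)
    (hcontr : ∀ x : G, Tendsto (fun n : ℕ => (α ^ n) x) atTop (𝓝 1)) :
    ∃ V : Subgroup G, IsCompact (V : Set G) ∧ IsOpen (V : Set G) ∧ (∀ x ∈ V, α x ∈ V) ∧
      ∀ W ∈ 𝓝 (1 : G), ∃ m : ℕ, ∀ x ∈ V, (α ^ m) x ∈ W := by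
  classical
  obtain ⟨U, hUcomp, hUopen, -⟩ := stmt3_vanDantzig (W := (Set.univ : Set G)) Filter.univ_mem
  obtain ⟨M, hM⟩ := stmt3_unifContr α hc hcontr hUcomp U hUopen
  set V : Subgroup G :=
    { carrier := { x : G | ∀ m : ℕ, (α ^ m) x ∈ U }
      mul_mem' := fun {a b} ha hb m => by rw [map_mul]; exact U.mul_mem (ha m) (hb m)
      one_mem' := fun m => by rw [map_one]; exact U.one_mem
      inv_mem' := fun {a} ha m => by rw [map_inv]; exact U.inv_mem (ha m) } with hVdef
  have hVmem : ∀ x, x ∈ V ↔ ∀ m : ℕ, (α ^ m) x ∈ U := fun x => Iff.rfl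
  have hVU : (V : Set G) ⊆ (U : Set G) := by
    intro x hx
    have := (hVmem x).mp hx 0
    rwa [pow_zero] at this
  have hVeq : (V : Set G)
      = (U : Set G) ∩ ⋂ m ∈ Finset.range M, (fun x : G => (α ^ m) x) ⁻¹' (U : Set G) := by
    ext x
    simp only [Set.mem_inter_iff, Set.mem_iInter, Set.mem_preimage, SetLike.mem_coe,
      Finset.mem_range]
    constructor
    · intro hx
      exact ⟨hVU hx, fun m _ => hx m⟩
    · rintro ⟨hxU, hxm⟩ m
      by_cases hmM : m < M
      · exact hxm m hmM
      · exact hM m (le_of_not_gt hmM) x hxU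
  have hVopen : IsOpen (V : Set G) := by
    rw [hVeq]
    exact hUopen.inter (isOpen_biInter_finset fun m _ => hUopen.preimage (stmt3_contPow α hc m))
  have hVcl : IsClosed (V : Set G) := by
    rw [hVeq]
    exact (Subgroup.isClosed_of_isOpen U hUopen).inter
      (isClosed_biInter fun m _ =>
        (Subgroup.isClosed_of_isOpen U hUopen).preimage (stmt3_contPow α hc m))
  have hVcomp : IsCompact (V : Set G) := hUcomp.of_isClosed_subset hVcl hVU
  refine ⟨V, hVcomp, hVopen, ?_, ?_⟩
  · intro x hx m
    have := (hVmem x).mp hx (m + 1)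
    rwa [stmt3_pow_succ_apply α m x] at this
  · intro W hW
    obtain ⟨UW, hUWcomp, hUWopen, hUWW⟩ := stmt3_vanDantzig hW
    obtain ⟨M', hM'⟩ := stmt3_unifContr α hc hcontr hVcomp UW hUWopen
    exact ⟨M', fun x hx => hUWW (hM' M' le_rfl x hx)⟩

end Stmt3Aux

/-- If `H` is a closed subgroup of a totally disconnected locally compact
contraction group `(G, α)` with `α(H) ⊆ H`, then `S = ⋃ₙ α⁻ⁿ(H)` is a closed
`α`-stable subgroup of `G` in which `H` is open; if `H` is normal in `G`, so is `S`. -/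
theorem stmt3 (G : Type*) [Group G] [TopologicalSpace G] [IsTopologicalGroup G]
    [LocallyCompactSpace G] [T2Space G] [TotallyDisconnectedSpace G]
    (α : MulAut G) (hc : Continuous α) (hc' : Continuous α.symm)
    (hcontr : ∀ x : G, Tendsto (fun n : ℕ => (α ^ n) x) atTop (𝓝 1))
    (H : Subgroup G) (hHclosed : IsClosed (H : Set G)) (hHinv : ∀ x ∈ H, α x ∈ H) :
    ∃ S : Subgroup G,
      (S : Set G) = ⋃ n : ℕ, (fun x => (α ^ n) x) ⁻¹' (H : Set G) ∧
      IsClosed (S : Set G) ∧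
      (⇑α '' (S : Set G) = (S : Set G)) ∧
      IsOpen {x : S | (x : G) ∈ H} ∧
      (H.Normal → S.Normal) := by
  classical
  -- monotonicity of the filtration
  have hmono : ∀ {n k : ℕ}, n ≤ k → ∀ {x : G}, (α ^ n) x ∈ H → (α ^ k) x ∈ H := by
    intro n k hnk
    induction k, hnk using Nat.le_induction with
    | base => exact fun hx => hx
    | succ k hk ih =>
        intro x hx
        rw [stmt3_pow_succ_apply' α k x]
        exact hHinv _ (ih hx)
  -- the subgroup S
  set Ssub : Subgroup G :=
    { carrier := ⋃ n : ℕ, (fun x => (α ^ n) x) ⁻¹' (H : Set G)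
      mul_mem' := by
        rintro a b ha hb
        rcases Set.mem_iUnion.mp ha with ⟨n, hn⟩
        rcases Set.mem_iUnion.mp hb with ⟨k, hk⟩
        refine Set.mem_iUnion.mpr ⟨max n k, ?_⟩
        have hna : (α ^ max n k) a ∈ H := hmono (Nat.le_max_left n k) hn
        have hkb : (α ^ max n k) b ∈ H := hmono (Nat.le_max_right n k) hk
        simp only [Set.mem_preimage, SetLike.mem_coe, map_mul]
        exact H.mul_mem hna hkb
      one_mem' := Set.mem_iUnion.mpr ⟨0, by
        simp only [Set.mem_preimage, SetLike.mem_coe, map_one]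
        exact H.one_mem⟩
      inv_mem' := by
        rintro a ha
        rcases Set.mem_iUnion.mp ha with ⟨n, hn⟩
        refine Set.mem_iUnion.mpr ⟨n, ?_⟩
        simp only [Set.mem_preimage, SetLike.mem_coe, map_inv]
        exact H.inv_mem hn } with hSdef
  have hSmem : ∀ x : G, x ∈ Ssub ↔ ∃ n : ℕ, (α ^ n) x ∈ H := by
    intro x
    constructor
    · intro hx; rcases Set.mem_iUnion.mp hx with ⟨n, hn⟩; exact ⟨n, hn⟩
    · rintro ⟨n, hn⟩; exact Set.mem_iUnion.mpr ⟨n, hn⟩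
  have hHS : ∀ x ∈ H, x ∈ Ssub := fun x hx =>
    (hSmem x).mpr ⟨0, by rwa [pow_zero]⟩
  -- tidy subgroup
  obtain ⟨V, hVcomp, hVopen, hVα, hVshrink⟩ := stmt3_tidy α hc hcontr
  have hVcl : IsClosed (V : Set G) := hVcomp.isClosed
  have hVpow : ∀ (m : ℕ) (x : G), x ∈ V → (α ^ m) x ∈ V := by
    intro m
    induction m with
    | zero => intro x hx; rwa [pow_zero]
    | succ m ih =>
        intro x hx
        rw [stmt3_pow_succ_apply α m x]
        exact ih _ (hVα x hx)
  -- the filtration M j = V ⊓ α^{-j}(H)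
  set M : ℕ → Subgroup G := fun j => V ⊓ Subgroup.comap (α ^ j).toMonoidHom H with hMdef
  have hMmem : ∀ (j : ℕ) (x : G), x ∈ M j ↔ x ∈ V ∧ (α ^ j) x ∈ H := by
    intro j x
    simp [hMdef, Subgroup.mem_inf, Subgroup.mem_comap]
  have hMcl : ∀ j, IsClosed (M j : Set G) := by
    intro j
    have : (M j : Set G) = (V : Set G) ∩ (fun x : G => (α ^ j) x) ⁻¹' (H : Set G) := by
      ext x
      simp only [Set.mem_inter_iff, Set.mem_preimage, SetLike.mem_coe]
      exact hMmem j x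
    rw [this]
    exact hVcl.inter (hHclosed.preimage (stmt3_contPow α hc j))
  have hMmono : ∀ {j k : ℕ}, j ≤ k → ∀ {x : G}, x ∈ M j → x ∈ M k := by
    intro j k hjk x hx
    rcases (hMmem j x).mp hx with ⟨hxV, hxH⟩
    exact (hMmem k x).mpr ⟨hxV, hmono hjk hxH⟩
  have hMα : ∀ (j : ℕ) (x : G), x ∈ M j → α x ∈ M j := by
    intro j x hx
    rcases (hMmem j x).mp hx with ⟨hxV, hxH⟩
    refine (hMmem j (α x)).mpr ⟨hVα x hxV, ?_⟩
    rw [← stmt3_pow_succ_apply α j x]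
    exact hmono (Nat.le_succ j) hxH
  -- images of V
  set AV : ℕ → Subgroup G := fun m => V.map (α ^ m).toMonoidHom with hAVdef
  have hAVmem : ∀ (m : ℕ) (x : G), x ∈ AV m ↔ ∃ v ∈ V, (α ^ m) v = x := by
    intro m x
    simp [hAVdef, Subgroup.mem_map]
  have hAVset : ∀ m : ℕ, (AV m : Set G) = (fun x : G => (α ^ m) x) '' (V : Set G) := by
    intro m
    rw [hAVdef, Subgroup.coe_map]
    rfl
  -- homeomorphisms
  set e : ℕ → (G ≃ₜ G) := fun n =>
    { toEquiv := (α ^ n).toEquiv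
      continuous_toFun := stmt3_contPow α hc n
      continuous_invFun := stmt3_contPowSymm α hc' n } with hedef
  have hecoe : ∀ (n : ℕ) (x : G), e n x = (α ^ n) x := fun n x => rfl
  have heeq : ∀ n : ℕ, (fun x : G => (α ^ n) x) = ⇑(e n) := fun n => rfl
  have hAVopen : ∀ m : ℕ, IsOpen (AV m : Set G) := by
    intro m
    rw [hAVset m, heeq m]
    exact (e m).isOpenMap _ hVopen
  have hAVcl : ∀ m : ℕ, IsClosed (AV m : Set G) := by
    intro m
    rw [hAVset m]
    exact (hVcomp.image (stmt3_contPow α hc m)).isClosed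
  have hAVV : ∀ m : ℕ, (AV m : Set G) ⊆ (V : Set G) := by
    intro m x hx
    rcases (hAVmem m x).mp hx with ⟨v, hv, rfl⟩
    exact hVpow m v hv
  -- the union X and its closure P
  set Xsub : Subgroup G :=
    { carrier := ⋃ j : ℕ, (M j : Set G)
      mul_mem' := by
        rintro a b ha hb
        rcases Set.mem_iUnion.mp ha with ⟨i, hi⟩
        rcases Set.mem_iUnion.mp hb with ⟨j, hj⟩
        refine Set.mem_iUnion.mpr ⟨max i j, ?_⟩
        exact (M (max i j)).mul_mem (hMmono (Nat.le_max_left i j) hi)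
          (hMmono (Nat.le_max_right i j) hj)
      one_mem' := Set.mem_iUnion.mpr ⟨0, (M 0).one_mem⟩
      inv_mem' := by
        rintro a ha
        rcases Set.mem_iUnion.mp ha with ⟨i, hi⟩
        exact Set.mem_iUnion.mpr ⟨i, (M i).inv_mem hi⟩ } with hXdef
  have hXmem : ∀ x : G, x ∈ Xsub ↔ ∃ j : ℕ, x ∈ M j := by
    intro x
    constructor
    · intro hx; rcases Set.mem_iUnion.mp hx with ⟨j, hj⟩; exact ⟨j, hj⟩
    · rintro ⟨j, hj⟩; exact Set.mem_iUnion.mpr ⟨j, hj⟩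
  set Psub : Subgroup G := Xsub.topologicalClosure with hPdef
  have hPset : (Psub : Set G) = closure (Xsub : Set G) := rfl
  have hXP : (Xsub : Set G) ⊆ (Psub : Set G) := by
    rw [hPset]; exact subset_closure
  have hXV : (Xsub : Set G) ⊆ (V : Set G) := by
    rintro x hx
    rcases (hXmem x).mp hx with ⟨j, hj⟩
    exact ((hMmem j x).mp hj).1
  have hPV : (Psub : Set G) ⊆ (V : Set G) := by
    rw [hPset]
    exact closure_minimal hXV hVcl
  have hPcomp : IsCompact (Psub : Set G) := hVcomp.of_isClosed_subset isClosed_closure hPV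
  -- α(X) = X ∩ AV 1
  have hα1 : (fun x : G => α x) '' (Xsub : Set G) = (Xsub : Set G) ∩ (AV 1 : Set G) := by
    apply Set.Subset.antisymm
    · rintro _ ⟨x, hx, rfl⟩
      rcases (hXmem x).mp hx with ⟨j, hj⟩
      refine ⟨(hXmem (α x)).mpr ⟨j, hMα j x hj⟩, ?_⟩
      refine (hAVmem 1 (α x)).mpr ⟨x, ((hMmem j x).mp hj).1, ?_⟩
      rw [pow_one]
    · rintro x ⟨hxX, hxA⟩
      rcases (hAVmem 1 x).mp hxA with ⟨v, hv, hvx⟩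
      rw [pow_one] at hvx
      rcases (hXmem x).mp hxX with ⟨j, hj⟩
      have hvM : v ∈ M (j + 1) := by
        refine (hMmem (j + 1) v).mpr ⟨hv, ?_⟩
        rw [stmt3_pow_succ_apply α j v, hvx]
        exact ((hMmem j x).mp hj).2
      exact ⟨v, (hXmem v).mpr ⟨j + 1, hvM⟩, hvx⟩
  -- α(P) = P ∩ AV 1
  have hαP : (fun x : G => α x) '' (Psub : Set G) = (Psub : Set G) ∩ (AV 1 : Set G) := by
    have he1 : (fun x : G => α x) = ⇑(e 1) := by
      funext x
      rw [hecoe 1 x, pow_one]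
    rw [hPset, he1, (e 1).image_closure, ← he1, hα1]
    apply Set.Subset.antisymm
    · intro x hx
      refine ⟨closure_mono Set.inter_subset_left hx, ?_⟩
      have := closure_mono (Set.inter_subset_right
        (s := (Xsub : Set G)) (t := (AV 1 : Set G))) hx
      rwa [(hAVcl 1).closure_eq] at this
    · intro x hx
      have := (hAVopen 1).inter_closure (t := (Xsub : Set G)) ⟨hx.2, hx.1⟩
      rwa [Set.inter_comm] at this
  -- finite subcover and the index J
  have hcov : (Psub : Set G) ⊆ ⋃ p : ↥Psub, ((p : G) • (AV 1 : Set G)) := by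
    intro p hp
    refine Set.mem_iUnion.mpr ⟨⟨p, hp⟩, ?_⟩
    exact ⟨1, (AV 1).one_mem, mul_one p⟩
  obtain ⟨t, ht⟩ := hPcomp.elim_finite_subcover
    (fun p : ↥Psub => ((p : G) • (AV 1 : Set G)))
    (fun p => (hAVopen 1).smul (p : G)) hcov
  have hI : ∀ i : ↥Psub, ∃ j : ℕ, ∃ q, q ∈ M j ∧ (i : G) ∈ q • (AV 1 : Set G) := by
    intro i
    have hiP : (i : G) ∈ closure (Xsub : Set G) := by
      rw [← hPset]; exact i.2
    have hopen : IsOpen ((i : G) • (AV 1 : Set G)) := (hAVopen 1).smul _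
    have hmem : (i : G) ∈ (i : G) • (AV 1 : Set G) := ⟨1, (AV 1).one_mem, mul_one _⟩
    obtain ⟨q, hq1, hq2⟩ := mem_closure_iff.mp hiP _ hopen hmem
    rcases (hXmem q).mp hq2 with ⟨j, hj⟩
    rcases hq1 with ⟨a, ha, hqa⟩
    refine ⟨j, q, hj, ⟨a⁻¹, (AV 1).inv_mem ha, ?_⟩⟩
    have : q = (i : G) * a := hqa.symm
    rw [this]
    simp [smul_eq_mul, mul_assoc]
  choose f q hfq hfmem using hI
  set J : ℕ := t.sup f with hJdef
  have hcovJ : ∀ p ∈ Psub, ∃ m ∈ M J, m⁻¹ * p ∈ (Psub : Set G) ∩ (AV 1 : Set G) := by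
    intro p hp
    rcases Set.mem_iUnion₂.mp (ht hp) with ⟨i, hit, hpi⟩
    rcases hpi with ⟨a, ha, hia⟩
    rcases hfmem i with ⟨b, hb, hib⟩
    have hqJ : q i ∈ M J := hMmono (Finset.le_sup (f := f) hit) (hfq i)
    refine ⟨q i, hqJ, ?_, ?_⟩
    · have hqP : q i ∈ Psub := hXP ((hXmem (q i)).mpr ⟨f i, hfq i⟩)
      exact Psub.mul_mem (Psub.inv_mem hqP) hp
    · have hia' : (i : G) * a = p := by simpa [smul_eq_mul] using hia
      have hib' : q i * b = (i : G) := by simpa [smul_eq_mul] using hib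
      have hp' : p = q i * (b * a) := by rw [← mul_assoc, hib', hia']
      rw [hp']
      have : (q i)⁻¹ * (q i * (b * a)) = b * a := by group
      rw [this]
      exact (AV 1).mul_mem hb ha
  -- iterating: m⁻¹ p ∈ P ∩ AV (k+1)
  have hind : ∀ k : ℕ, ∀ p ∈ Psub, ∃ m ∈ M J,
      m⁻¹ * p ∈ (Psub : Set G) ∩ (AV (k + 1) : Set G) := by
    intro k
    induction k with
    | zero => exact hcovJ
    | succ k ih =>
        intro p hp
        obtain ⟨m, hm, hmp⟩ := hcovJ p hp
        have hcα : m⁻¹ * p ∈ (fun x : G => α x) '' (Psub : Set G) := by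
          rw [hαP]; exact hmp
        rcases hcα with ⟨c', hc'P, hc'c⟩
        obtain ⟨m', hm', hm'd⟩ := ih c' hc'P
        refine ⟨m * α m', (M J).mul_mem hm (hMα J m' hm'), ?_, ?_⟩
        · have : (m * α m')⁻¹ * p = α (m'⁻¹ * c') := by
            rw [map_mul, map_inv, mul_inv_rev, mul_assoc, ← hc'c]
          rw [this]
          have : α (m'⁻¹ * c') ∈ (fun x : G => α x) '' (Psub : Set G) :=
            ⟨m'⁻¹ * c', hm'd.1, rfl⟩
          rw [hαP] at this
          exact this.1
        · have heq : (m * α m')⁻¹ * p = α (m'⁻¹ * c') := by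
            rw [map_mul, map_inv, mul_inv_rev, mul_assoc, ← hc'c]
          rw [heq]
          rcases (hAVmem (k + 1) (m'⁻¹ * c')).mp hm'd.2 with ⟨v, hv, hveq⟩
          refine (hAVmem (k + 2) (α (m'⁻¹ * c'))).mpr ⟨v, hv, ?_⟩
          rw [stmt3_pow_succ_apply' α (k + 1) v, hveq]
  -- density of M J in P
  have hdense : (Psub : Set G) ⊆ closure (M J : Set G) := by
    intro p hp
    rw [mem_closure_iff]
    intro O hO hpO
    set N : Set G := (fun a : G => p * a⁻¹) ⁻¹' O with hNdef
    have hNopen : IsOpen N := hO.preimage (continuous_const.mul continuous_inv)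
    have h1N : (1 : G) ∈ N := by
      simp only [hNdef, Set.mem_preimage, inv_one, mul_one]
      exact hpO
    obtain ⟨k₀, hk₀⟩ := hVshrink N (hNopen.mem_nhds h1N)
    obtain ⟨m, hm, hmp⟩ := hind k₀ p hp
    rcases (hAVmem (k₀ + 1) (m⁻¹ * p)).mp hmp.2 with ⟨v, hv, hveq⟩
    have hcN : m⁻¹ * p ∈ N := by
      rw [← hveq, stmt3_pow_succ_apply α k₀ v]
      exact hk₀ (α v) (hVα v hv)
    have hmO : m ∈ O := by
      have : p * (m⁻¹ * p)⁻¹ ∈ O := hcN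
      have heq : p * (m⁻¹ * p)⁻¹ = m := by group
      rwa [heq] at this
    exact ⟨m, hmO, hm⟩
  have hPM : (Psub : Set G) = (M J : Set G) := by
    apply Set.Subset.antisymm
    · intro p hp
      have := hdense hp
      rwa [(hMcl J).closure_eq] at this
    · intro x hx
      exact hXP ((hXmem x).mpr ⟨J, hx⟩)
  -- S ∩ V = M J
  have hSV : (Ssub : Set G) ∩ (V : Set G) = (M J : Set G) := by
    apply Set.Subset.antisymm
    · rintro x ⟨hxS, hxV⟩
      rcases (hSmem x).mp hxS with ⟨n, hn⟩
      have : x ∈ M n := (hMmem n x).mpr ⟨hxV, hn⟩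
      rw [← hPM]
      exact hXP ((hXmem x).mpr ⟨n, this⟩)
    · intro x hx
      rcases (hMmem J x).mp hx with ⟨hxV, hxH⟩
      exact ⟨(hSmem x).mpr ⟨J, hxH⟩, hxV⟩
  -- α-invariance of S (both directions)
  have hSα : ∀ x ∈ Ssub, α x ∈ Ssub := by
    intro x hx
    rcases (hSmem x).mp hx with ⟨n, hn⟩
    refine (hSmem (α x)).mpr ⟨n, ?_⟩
    rw [← stmt3_pow_succ_apply α n x]
    exact hmono (Nat.le_succ n) hn
  have hSpow : ∀ (n : ℕ) (x : G), x ∈ Ssub → (α ^ n) x ∈ Ssub := by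
    intro n
    induction n with
    | zero => intro x hx; rwa [pow_zero]
    | succ n ih =>
        intro x hx
        rw [stmt3_pow_succ_apply α n x]
        exact ih _ (hSα x hx)
  have himage : ⇑α '' (Ssub : Set G) = (Ssub : Set G) := by
    apply Set.Subset.antisymm
    · rintro _ ⟨x, hx, rfl⟩
      exact hSα x hx
    · intro s hs
      refine ⟨α.symm s, ?_, α.apply_symm_apply s⟩
      rcases (hSmem s).mp hs with ⟨n, hn⟩
      refine (hSmem (α.symm s)).mpr ⟨n + 1, ?_⟩
      rw [stmt3_pow_succ_apply α n (α.symm s), α.apply_symm_apply]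
      exact hn
  -- S is closed
  have hSclosed : IsClosed (Ssub : Set G) := by
    refine isClosed_of_closure_subset ?_
    intro x hx
    have := (hcontr x).eventually (hVopen.mem_nhds V.one_mem)
    rcases eventually_atTop.mp this with ⟨n, hn⟩
    have hxn : (α ^ n) x ∈ V := hn n le_rfl
    have hxnc : (α ^ n) x ∈ closure (Ssub : Set G) := by
      have h1 : (α ^ n) x ∈ ⇑(e n) '' closure (Ssub : Set G) := ⟨x, hx, rfl⟩
      rw [(e n).image_closure] at h1
      refine closure_mono ?_ h1
      rintro _ ⟨y, hy, rfl⟩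
      exact hSpow n y hy
    have : (α ^ n) x ∈ closure ((Ssub : Set G) ∩ (V : Set G)) := by
      have := hVopen.inter_closure (t := (Ssub : Set G)) ⟨hxn, hxnc⟩
      rwa [Set.inter_comm] at this
    rw [hSV, (hMcl J).closure_eq] at this
    rcases (hMmem J ((α ^ n) x)).mp this with ⟨-, hH⟩
    rw [stmt3_pow_add_apply α J n x] at hH
    exact (hSmem x).mpr ⟨J + n, hH⟩
  -- H is open in S
  have hkey : ∀ a : G, a ∈ Ssub → a ∈ (AV J : Set G) → a ∈ H := by
    intro a haS haA
    rcases (hAVmem J a).mp haA with ⟨v, hv, hva⟩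
    rcases (hSmem a).mp haS with ⟨n, hn⟩
    have hvM : v ∈ M (n + J) := by
      refine (hMmem (n + J) v).mpr ⟨hv, ?_⟩
      rw [← stmt3_pow_add_apply α n J v, hva]
      exact hn
    have : v ∈ M J := by
      have h1 : v ∈ (Psub : Set G) := hXP ((hXmem v).mpr ⟨n + J, hvM⟩)
      rw [hPM] at h1
      exact h1
    rcases (hMmem J v).mp this with ⟨-, hvH⟩
    rwa [hva] at hvH
  have hopenS : IsOpen {x : Ssub | (x : G) ∈ H} := by
    have heqset : {x : ↥Ssub | (x : G) ∈ H}
        = (Subtype.val : ↥Ssub → G) ⁻¹' ((H : Set G) * (AV J : Set G)) := by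
      ext x
      simp only [Set.mem_setOf_eq, Set.mem_preimage]
      constructor
      · intro hx
        exact ⟨(x : G), hx, 1, (AV J).one_mem, mul_one _⟩
      · rintro ⟨h, hh, a, ha, hha⟩
        have haS : a ∈ Ssub := by
          have hhS : h ∈ Ssub := hHS h hh
          have : a = h⁻¹ * (x : G) := by rw [← hha]; group
          rw [this]
          exact Ssub.mul_mem (Ssub.inv_mem hhS) x.2
        have haH : a ∈ H := hkey a haS ha
        have : (x : G) = h * a := hha.symm
        rw [this]
        exact H.mul_mem hh haH
    rw [heqset]
    exact ((hAVopen J).mul_left).preimage continuous_subtype_val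
  -- normality
  have hnormal : H.Normal → Ssub.Normal := by
    intro hN
    refine ⟨fun s hs g => ?_⟩
    rcases (hSmem s).mp hs with ⟨n, hn⟩
    refine (hSmem (g * s * g⁻¹)).mpr ⟨n, ?_⟩
    have : (α ^ n) (g * s * g⁻¹) = (α ^ n) g * (α ^ n) s * ((α ^ n) g)⁻¹ := by
      rw [map_mul, map_mul, map_inv]
    rw [this]
    exact hN.conj_mem _ hn _
  exact ⟨Ssub, rfl, hSclosed, himage, hopenS, hnormal⟩
end

section
/- Let F be a finite group, H = F^(−ℕ) × F^ℕ₀ the restricted product (elements of F^ℤ with only finitely many nontrivial coordinates in negative positions), and σ : H → H the right shift. Then σ is a contractive automorphism of H and the module Δ_H(σ⁻¹) equals |F|. -/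
open Filter Topology MeasureTheory

/-- The restricted product `F^(−ℕ) × F^ℕ₀`: all `f : ℤ → F` with only finitely
many nontrivial coordinates at negative positions. -/
def restrictedProd (F : Type*) [Group F] : Subgroup (ℤ → F) where
  carrier := {f | {n : ℤ | n < 0 ∧ f n ≠ 1}.Finite}
  one_mem' := by simp
  mul_mem' := by
    intro a b ha hb
    apply (ha.union hb).subset
    rintro n ⟨hneg, hne⟩
    rcases eq_or_ne (a n) 1 with h1 | h1
    · exact Or.inr ⟨hneg, fun h2 => hne (by simp [Pi.mul_apply, h1, h2])⟩
    · exact Or.inl ⟨hneg, h1⟩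
  inv_mem' := by
    intro a ha
    apply ha.subset
    rintro n ⟨hneg, hne⟩
    exact ⟨hneg, fun h => hne (by simp [Pi.inv_apply, h])⟩

lemma shift_mem_restrictedProd (F : Type*) [Group F]
    (f : ℤ → F) (hf : f ∈ restrictedProd F) :
    (fun n : ℤ => f (n - 1)) ∈ restrictedProd F := by
  apply (hf.image (· + 1)).subset
  rintro n ⟨hneg, hne⟩
  exact ⟨n - 1, ⟨by omega, hne⟩, by ring⟩

lemma unshift_mem_restrictedProd (F : Type*) [Group F]
    (f : ℤ → F) (hf : f ∈ restrictedProd F) :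
    (fun n : ℤ => f (n + 1)) ∈ restrictedProd F := by
  apply ((hf.image (· - 1)).union (Set.finite_singleton (-1))).subset
  rintro n ⟨hneg, hne⟩
  rcases eq_or_ne n (-1) with h | h
  · exact Or.inr h
  · exact Or.inl ⟨n + 1, ⟨by omega, hne⟩, by ring⟩

/-- The right shift on the restricted product. -/
def shiftR (F : Type*) [Group F] : MulAut (restrictedProd F) where
  toFun f := ⟨fun n => (f : ℤ → F) (n - 1), shift_mem_restrictedProd F _ f.2⟩
  invFun f := ⟨fun n => (f : ℤ → F) (n + 1), unshift_mem_restrictedProd F _ f.2⟩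
  left_inv f := Subtype.ext (funext fun n => by simp)
  right_inv f := Subtype.ext (funext fun n => by simp)
  map_mul' a b := Subtype.ext rfl

/-- The compact open subgroup `F^ℕ` (coordinates supported on positive indices). -/
def posSupp (F : Type*) [Group F] : Subgroup (restrictedProd F) where
  carrier := {f | ∀ n : ℤ, n ≤ 0 → (f : ℤ → F) n = 1}
  one_mem' := fun n _ => rfl
  mul_mem' := by
    intro a b ha hb n hn
    have : ((a * b : restrictedProd F) : ℤ → F) n = (a : ℤ → F) n * (b : ℤ → F) n := rfl
    rw [this, ha n hn, hb n hn, mul_one]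
  inv_mem' := by
    intro a ha n hn
    have : ((a⁻¹ : restrictedProd F) : ℤ → F) n = ((a : ℤ → F) n)⁻¹ := rfl
    rw [this, ha n hn, inv_one]

/-- Delta element: `g` at coordinate 0, identity elsewhere. -/
def deltaEl {F : Type*} [Group F] (g : F) : restrictedProd F :=
  ⟨fun n => if n = 0 then g else 1, by
    apply Set.Finite.subset Set.finite_empty
    rintro n ⟨hn, hne⟩
    simp [show n ≠ 0 by omega] at hne⟩

lemma coe_mul_apply {F : Type*} [Group F] (a b : restrictedProd F) (n : ℤ) :
    ((a * b : restrictedProd F) : ℤ → F) n = (a : ℤ → F) n * (b : ℤ → F) n := rfl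

lemma coe_inv_apply {F : Type*} [Group F] (a : restrictedProd F) (n : ℤ) :
    ((a⁻¹ : restrictedProd F) : ℤ → F) n = ((a : ℤ → F) n)⁻¹ := rfl

lemma shiftR_apply {F : Type*} [Group F] (f : restrictedProd F) (n : ℤ) :
    ((shiftR F f : restrictedProd F) : ℤ → F) n = (f : ℤ → F) (n - 1) := rfl

lemma shiftR_pow_apply {F : Type*} [Group F] (k : ℕ) (f : restrictedProd F) (n : ℤ) :
    (((shiftR F ^ k) f : restrictedProd F) : ℤ → F) n = (f : ℤ → F) (n - k) := by
  induction k generalizing f n with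
  | zero => simp
  | succ m ih =>
      rw [pow_succ, MulAut.mul_apply, ih, shiftR_apply]
      push_cast
      ring_nf

lemma mem_posSupp_iff {F : Type*} [Group F] (f : restrictedProd F) :
    f ∈ posSupp F ↔ ∀ n : ℤ, n ≤ 0 → (f : ℤ → F) n = 1 := Iff.rfl

/-- The right shift `σ` on the restricted product `H = F^(−ℕ) × F^ℕ₀` over a
finite group `F` is a contractive automorphism, and the module `Δ_H(σ⁻¹)`
equals `|F|`: both `Δ_H(σ⁻¹) = [σ⁻¹(W) : W] = |F|` for the compact open
subgroup `W = F^ℕ`, and `μ(σ⁻¹(W)) = |F| ⬝ μ(W)` for Haar measures `μ`. -/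
theorem stmt9 (F : Type*) [Group F] [Fintype F]
    [TopologicalSpace (restrictedProd F)] [IsTopologicalGroup (restrictedProd F)]
    (hbasis : (𝓝 (1 : restrictedProd F)).HasBasis (fun _ : ℤ => True)
      (fun k => {f : restrictedProd F | ∀ n : ℤ, n < k → (f : ℤ → F) n = 1}))
    [MeasurableSpace (restrictedProd F)] [BorelSpace (restrictedProd F)]
    (μ : Measure (restrictedProd F)) [μ.IsHaarMeasure] :
    Continuous (shiftR F) ∧ Continuous (shiftR F).symm ∧
    (∀ x : restrictedProd F,
      Tendsto (fun n : ℕ => ((shiftR F) ^ n) x) atTop (𝓝 1)) ∧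
    (posSupp F).relIndex ((posSupp F).comap (shiftR F).toMonoidHom)
      = Fintype.card F ∧
    μ ((⇑(shiftR F)) ⁻¹' (posSupp F : Set (restrictedProd F)))
      = (Fintype.card F : ENNReal) * μ (posSupp F : Set (restrictedProd F)) := by
  -- Continuity of `shiftR`
  have hcont : Continuous ⇑(shiftR F) := by
    apply continuous_of_continuousAt_one (shiftR F)
    have : (shiftR F) (1 : restrictedProd F) = 1 := map_one _
    rw [ContinuousAt, this]
    rw [hbasis.tendsto_iff hbasis]
    rintro k -
    exact ⟨k - 1, trivial, fun f hf n hn => hf (n - 1) (by omega)⟩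
  -- Continuity of the inverse
  have hcont' : Continuous ⇑(shiftR F).symm := by
    apply continuous_of_continuousAt_one (shiftR F).symm
    have : (shiftR F).symm (1 : restrictedProd F) = 1 := map_one _
    rw [ContinuousAt, this]
    rw [hbasis.tendsto_iff hbasis]
    rintro k -
    exact ⟨k + 1, trivial, fun f hf n hn => hf (n + 1) (by omega)⟩
  refine ⟨hcont, hcont', ?_, ?_, ?_⟩
  -- Contraction
  · intro x
    rw [hbasis.tendsto_right_iff]
    rintro k -
    obtain ⟨N, hN⟩ := x.2.bddBelow
    have hN' : ∀ m : ℤ, m < min N 0 → (x : ℤ → F) m = 1 := by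
      intro m hm
      by_contra hne
      exact absurd (hN ⟨by omega, hne⟩) (by omega)
    filter_upwards [eventually_ge_atTop (k - min N 0).toNat] with n hn
    intro m hm
    rw [shiftR_pow_apply]
    apply hN'
    have h1 : ((k - min N 0).toNat : ℤ) ≤ n := by exact_mod_cast hn
    have h2 : k - min N 0 ≤ ((k - min N 0).toNat : ℤ) := Int.self_le_toNat _
    omega
  -- relindex computation
  · set V := (posSupp F).comap (shiftR F).toMonoidHom with hV
    have hmemV : ∀ f : restrictedProd F,
        f ∈ V ↔ ∀ n : ℤ, n ≤ 0 → (f : ℤ → F) (n - 1) = 1 := fun f => Iff.rfl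
    let φ : V →* F :=
      { toFun := fun f => ((f : restrictedProd F) : ℤ → F) 0
        map_one' := rfl
        map_mul' := fun a b => rfl }
    have hker : φ.ker = (posSupp F).subgroupOf V := by
      ext f
      simp only [MonoidHom.mem_ker, Subgroup.mem_subgroupOf, mem_posSupp_iff]
      constructor
      · intro h0 n hn
        rcases eq_or_lt_of_le hn with h | h
        · rwa [h]
        · have := ((hmemV f.1).mp f.2) (n + 1) (by omega)
          simpa using this
      · intro h
        exact h 0 le_rfl
    have hsurj : Function.Surjective φ := by
      intro g
      refine ⟨⟨deltaEl g, ?_⟩, ?_⟩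
      · rw [hmemV]
        intro n hn
        show (if n - 1 = 0 then g else 1) = 1
        rw [if_neg (by omega)]
      · show (if (0 : ℤ) = 0 then g else 1) = g
        rw [if_pos rfl]
    rw [Subgroup.relIndex, ← hker, Subgroup.index_ker,
      MonoidHom.range_eq_top.mpr hsurj, Subgroup.card_top, Nat.card_eq_fintype_card]
  -- measure computation
  · have hWopen : IsOpen (posSupp F : Set (restrictedProd F)) := by
      apply Subgroup.isOpen_of_mem_nhds
      exact hbasis.mem_iff.mpr ⟨1, trivial, fun f hf => (mem_posSupp_iff f).mpr
        (fun n hn => hf n (by omega))⟩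
    have hWmeas := hWopen.measurableSet
    have hVset : (⇑(shiftR F)) ⁻¹' (posSupp F : Set (restrictedProd F)) =
        ⋃ g : F, (fun x => (deltaEl g)⁻¹ * x) ⁻¹' (posSupp F : Set (restrictedProd F)) := by
      ext x
      simp only [Set.mem_preimage, Set.mem_iUnion, SetLike.mem_coe, mem_posSupp_iff]
      constructor
      · intro h
        refine ⟨(x : ℤ → F) 0, ?_⟩
        intro n hn
        rw [coe_mul_apply, coe_inv_apply]
        show (if n = 0 then (x : ℤ → F) 0 else 1)⁻¹ * (x : ℤ → F) n = 1
        rcases eq_or_lt_of_le hn with h0 | h0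
        · rw [if_pos h0, h0, inv_mul_cancel]
        · rw [if_neg (by omega), inv_one, one_mul]
          have := h (n + 1) (by omega)
          rwa [shiftR_apply, add_sub_cancel_right] at this
      · rintro ⟨g, hg⟩ n hn
        rw [shiftR_apply]
        have := hg (n - 1) (by omega)
        rw [coe_mul_apply, coe_inv_apply] at this
        have h2 : ((deltaEl g : restrictedProd F) : ℤ → F) (n - 1) = 1 := by
          show (if n - 1 = 0 then g else 1) = 1
          rw [if_neg (by omega)]
        rwa [h2, inv_one, one_mul] at this
    have hdisj : Pairwise (Function.onFun Disjoint
        (fun g : F => (fun x => (deltaEl g)⁻¹ * x) ⁻¹' (posSupp F : Set (restrictedProd F)))) := by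
      intro g g' hne
      rw [Function.onFun, Set.disjoint_left]
      intro x hx hx'
      apply hne
      have e1 := (mem_posSupp_iff _).mp hx 0 le_rfl
      have e2 := (mem_posSupp_iff _).mp hx' 0 le_rfl
      rw [coe_mul_apply, coe_inv_apply] at e1 e2
      have d1 : ((deltaEl g : restrictedProd F) : ℤ → F) 0 = g := by
        show (if (0 : ℤ) = 0 then g else 1) = g
        rw [if_pos rfl]
      have d2 : ((deltaEl g' : restrictedProd F) : ℤ → F) 0 = g' := by
        show (if (0 : ℤ) = 0 then g' else 1) = g'
        rw [if_pos rfl]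
      rw [d1] at e1
      rw [d2] at e2
      rw [inv_mul_eq_one] at e1 e2
      rw [e1, e2]
    have hmeas : ∀ g : F, MeasurableSet
        ((fun x => (deltaEl g)⁻¹ * x) ⁻¹' (posSupp F : Set (restrictedProd F))) :=
      fun g => (continuous_mul_left _).measurable hWmeas
    rw [hVset, measure_iUnion hdisj hmeas]
    have : ∀ g : F, μ ((fun x => (deltaEl g)⁻¹ * x) ⁻¹'
        (posSupp F : Set (restrictedProd F))) = μ (posSupp F : Set (restrictedProd F)) :=
      fun g => measure_preimage_mul μ _ _
    rw [tsum_fintype]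
    simp only [this, Finset.sum_const, Finset.card_univ, nsmul_eq_mul]
end

section
/- Let p be a prime, d ∈ ℕ, and β : ℚ_p^d → ℚ_p^d a continuous linear automorphism all of whose eigenvalues (in an algebraic closure of ℚ_p) have absolute value < 1. If β leaves no nontrivial proper ℚ_p-subspace invariant, then (ℚ_p^d, β) is a simple contraction group: the only closed subgroups N of (ℚ_p^d,+) with β(N) = N are 0 and ℚ_p^d. -/
/-!
Let `N` be a closed `β`-stable subgroup. Being closed, `N` is a `ℤ_[p]`-module, since `ℤ` is dense
in `ℤ_[p]`. Its `ℚ_[p]`-span is `β`-stable, hence `0` (and then `N = 0`) or everything. In the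
latter case every vector lands in `N` after multiplication by a power of `p`, so by Baire `N` has
nonempty interior and is an open subgroup. Since `βⁿ v → 0`, some `βⁿ v` lies in `N`, and
`β⁻¹(N) = N` pulls this back to `v ∈ N`.
-/

open Filter Topology

theorem Set.mem_of_tendsto_iterate_of_preimage_subset {X : Type*} [TopologicalSpace X]
    {f : X → X} {S : Set X} (hS : f ⁻¹' S ⊆ S) {a : X} (ha : S ∈ 𝓝 a) {x : X}
    (hx : Tendsto (fun n => f^[n] x) atTop (𝓝 a)) : x ∈ S := by
  by_contra hxS
  have hcompl : MapsTo f Sᶜ Sᶜ := fun _ hy hfy => hy (hS hfy)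
  obtain ⟨n, hn⟩ := (hx.eventually_mem ha).exists
  exact hcompl.iterate n hxS hn

theorem Padic.exists_norm_pow_mul_le_one {p : ℕ} [Fact p.Prime] (c : ℚ_[p]) :
    ∃ m : ℕ, ‖(p : ℚ_[p]) ^ m * c‖ ≤ 1 := by
  have hp : (1 : ℝ) < p := by exact_mod_cast (Fact.out : p.Prime).one_lt
  obtain ⟨m, hm⟩ := pow_unbounded_of_one_lt ‖c‖ hp
  refine ⟨m, ?_⟩
  rw [norm_mul, norm_pow, Padic.norm_p, inv_pow, inv_mul_le_iff₀ (by positivity), mul_one]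
  exact hm.le

namespace AddSubgroup

variable {p : ℕ} [Fact p.Prime] {E : Type*} [AddCommGroup E] [Module ℚ_[p] E] [TopologicalSpace E]
  (N : AddSubgroup E)

theorem smul_mem_of_norm_le_one [ContinuousSMul ℚ_[p] E] (hN : IsClosed (N : Set E))
    {c : ℚ_[p]} (hc : ‖c‖ ≤ 1) {x : E} (hx : x ∈ N) : c • x ∈ N := by
  obtain ⟨c, rfl⟩ : ∃ c' : ℤ_[p], (c' : ℚ_[p]) = c := ⟨⟨c, hc⟩, rfl⟩
  refine PadicInt.denseRange_intCast.induction_on c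
    (hN.preimage (by fun_prop : Continuous fun a : ℤ_[p] => (a : ℚ_[p]) • x)) fun z => ?_
  simpa only [PadicInt.coe_intCast, Int.cast_smul_eq_zsmul] using N.zsmul_mem hx z

theorem pow_smul_mem_of_le [ContinuousSMul ℚ_[p] E] (hN : IsClosed (N : Set E)) {x : E}
    {k m : ℕ} (hk : (p : ℚ_[p]) ^ k • x ∈ N) (hkm : k ≤ m) : (p : ℚ_[p]) ^ m • x ∈ N := by
  obtain ⟨j, rfl⟩ := Nat.exists_eq_add_of_le hkm
  rw [pow_add, mul_comm, mul_smul]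
  refine N.smul_mem_of_norm_le_one hN ?_ hk
  rw [norm_pow, Padic.norm_p]
  exact pow_le_one₀ (by positivity)
    (inv_le_one_of_one_le₀ (by exact_mod_cast (Fact.out : p.Prime).one_lt.le))

theorem exists_pow_smul_mem_of_span_eq_top [ContinuousSMul ℚ_[p] E] (hN : IsClosed (N : Set E))
    (hspan : Submodule.span ℚ_[p] (N : Set E) = ⊤) (v : E) :
    ∃ k : ℕ, (p : ℚ_[p]) ^ k • v ∈ N := by
  have hv : v ∈ Submodule.span ℚ_[p] (N : Set E) := hspan ▸ Submodule.mem_top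
  induction hv using Submodule.span_induction with
  | mem x hx => exact ⟨0, by simpa using hx⟩
  | zero => exact ⟨0, by simp⟩
  | add x y _ _ hx hy =>
    obtain ⟨k, hk⟩ := hx
    obtain ⟨l, hl⟩ := hy
    refine ⟨max k l, ?_⟩
    rw [smul_add]
    exact N.add_mem (N.pow_smul_mem_of_le hN hk (le_max_left k l))
      (N.pow_smul_mem_of_le hN hl (le_max_right k l))
  | smul c x _ hx =>
    obtain ⟨k, hk⟩ := hx
    obtain ⟨m, hm⟩ := Padic.exists_norm_pow_mul_le_one c
    refine ⟨k + m, ?_⟩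
    have hsplit : (p : ℚ_[p]) ^ (k + m) • c • x = ((p : ℚ_[p]) ^ m * c) • (p : ℚ_[p]) ^ k • x := by
      rw [smul_smul, smul_smul, pow_add]
      ring_nf
    rw [hsplit]
    exact N.smul_mem_of_norm_le_one hN hm hk

theorem isOpen_of_span_eq_top [IsTopologicalAddGroup E] [ContinuousSMul ℚ_[p] E] [BaireSpace E]
    (hN : IsClosed (N : Set E)) (hspan : Submodule.span ℚ_[p] (N : Set E) = ⊤) :
    IsOpen (N : Set E) := by
  have hp : ∀ k : ℕ, (p : ℚ_[p]) ^ k ≠ 0 := fun k =>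
    pow_ne_zero k (by exact_mod_cast (Fact.out : p.Prime).ne_zero)
  let scale (k : ℕ) : E ≃ₜ E := Homeomorph.smulOfNeZero _ (hp k)
  obtain ⟨k, hk⟩ := nonempty_interior_of_iUnion_of_closed
    (f := fun k => scale k ⁻¹' N) (fun k => hN.preimage (scale k).continuous)
    (Set.eq_univ_of_forall fun v =>
      Set.mem_iUnion.2 (N.exists_pow_smul_mem_of_span_eq_top hN hspan v))
  rw [← (scale k).preimage_interior] at hk
  obtain ⟨x, hx⟩ := hk
  exact N.isOpen_of_mem_nhds (mem_interior_iff_mem_nhds.1 hx)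

end AddSubgroup

theorem stmt10_general (p : ℕ) [Fact p.Prime] (d : ℕ)
    (β : (Fin d → ℚ_[p]) ≃ₗ[ℚ_[p]] (Fin d → ℚ_[p]))
    (hcontr : ∀ v : Fin d → ℚ_[p],
      Tendsto (fun n : ℕ => (β ^ n) v) atTop (𝓝 0))
    (hirr : ∀ W : Submodule ℚ_[p] (Fin d → ℚ_[p]),
      W.map (β : (Fin d → ℚ_[p]) →ₗ[ℚ_[p]] (Fin d → ℚ_[p])) = W → W = ⊥ ∨ W = ⊤) :
    ∀ N : AddSubgroup (Fin d → ℚ_[p]),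
      IsClosed (N : Set (Fin d → ℚ_[p])) →
      ⇑β '' (N : Set (Fin d → ℚ_[p])) = (N : Set (Fin d → ℚ_[p])) →
      N = ⊥ ∨ N = ⊤ := by
  intro N hN hstab
  have hspan_stable : (Submodule.span ℚ_[p] (N : Set (Fin d → ℚ_[p]))).map
      (β : (Fin d → ℚ_[p]) →ₗ[ℚ_[p]] (Fin d → ℚ_[p])) = Submodule.span ℚ_[p] N := by
    rw [Submodule.map_span]
    exact congrArg _ hstab
  rcases hirr _ hspan_stable with hspan | hspan
  · left
    exact eq_bot_iff.2 fun x hx => (Submodule.mem_bot _).1 (hspan ▸ Submodule.subset_span hx)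
  · right
    have hpre : ⇑β ⁻¹' N ⊆ N := by
      have h := Set.preimage_image_eq (N : Set (Fin d → ℚ_[p])) β.injective
      rw [hstab] at h
      exact h.subset
    have hopen := N.isOpen_of_span_eq_top hN hspan
    exact eq_top_iff.2 fun v _ => Set.mem_of_tendsto_iterate_of_preimage_subset hpre
      (hopen.mem_nhds N.zero_mem) (by simpa only [LinearEquiv.coe_pow] using hcontr v)

/-- If `β` is a contractive linear automorphism of `ℚ_p^d` (all eigenvalues in
an algebraic closure have absolute value `< 1`, equivalently `βⁿ(v) → 0` for
all `v`) leaving no nontrivial proper subspace invariant, then `(ℚ_p^d, β)` is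
a simple contraction group: the only closed `β`-stable additive subgroups are
`0` and `ℚ_p^d`. -/
theorem stmt10 (p : ℕ) [Fact p.Prime] (d : ℕ) (hd : 0 < d)
    (β : (Fin d → ℚ_[p]) ≃ₗ[ℚ_[p]] (Fin d → ℚ_[p]))
    (hcontr : ∀ v : Fin d → ℚ_[p],
      Tendsto (fun n : ℕ => (β ^ n) v) atTop (𝓝 0))
    (hirr : ∀ W : Submodule ℚ_[p] (Fin d → ℚ_[p]),
      W.map (β : (Fin d → ℚ_[p]) →ₗ[ℚ_[p]] (Fin d → ℚ_[p])) = W → W = ⊥ ∨ W = ⊤) :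
    ∀ N : AddSubgroup (Fin d → ℚ_[p]),
      IsClosed (N : Set (Fin d → ℚ_[p])) →
      ⇑β '' (N : Set (Fin d → ℚ_[p])) = (N : Set (Fin d → ℚ_[p])) →
      N = ⊥ ∨ N = ⊤ :=
  stmt10_general p d β hcontr hirr
end

section
/- Let E be a finite-dimensional ℚ_p-vector space and α a contractive linear automorphism of E (αⁿ(v)→0 for all v). If N ⊆ E is a nontrivial closed additive subgroup with α(N) = N and such that the ℚ_p-span of N equals E, then N = E. -/
open Filter Topology

/-- Let `E` be a finite-dimensional `ℚ_p`-vector space and `α` a contractive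
linear automorphism of `E`. If `N` is a nontrivial closed `α`-stable additive
subgroup of `E` whose `ℚ_p`-span is all of `E`, then `N = E`. -/
theorem stmt11 (p : ℕ) [Fact p.Prime] (E : Type*)
    [AddCommGroup E] [Module ℚ_[p] E] [TopologicalSpace E]
    [IsTopologicalAddGroup E] [ContinuousSMul ℚ_[p] E] [T2Space E]
    [FiniteDimensional ℚ_[p] E]
    (α : E ≃ₗ[ℚ_[p]] E) (hc : Continuous α) (hc' : Continuous α.symm)
    (hcontr : ∀ v : E, Tendsto (fun n : ℕ => (α ^ n) v) atTop (𝓝 0))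
    (N : AddSubgroup E) (hNne : N ≠ ⊥)
    (hNclosed : IsClosed (N : Set E))
    (hNstable : ⇑α '' (N : Set E) = (N : Set E))
    (hNspan : Submodule.span ℚ_[p] (N : Set E) = ⊤) :
    N = ⊤ := by
  -- Step A: N is stable under scalar multiplication by elements of norm ≤ 1.
  have key : ∀ (c : ℚ_[p]), ‖c‖ ≤ 1 → ∀ x ∈ N, c • x ∈ N := by
    intro c hcle x hx
    set c' : ℤ_[p] := ⟨c, hcle⟩ with hc'def
    have : ∀ z : ℤ_[p], (z : ℚ_[p]) • x ∈ N := by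
      intro z
      have hclosed : IsClosed {z : ℤ_[p] | (z : ℚ_[p]) • x ∈ N} := by
        have hcoe : Continuous fun z : ℤ_[p] => (z : ℚ_[p]) := continuous_subtype_val
        exact hNclosed.preimage (hcoe.smul continuous_const)
      have hdense : Dense {z : ℤ_[p] | (z : ℚ_[p]) • x ∈ N} := by
        refine PadicInt.denseRange_natCast.mono ?_
        rintro _ ⟨n, rfl⟩
        show ((n : ℤ_[p]) : ℚ_[p]) • x ∈ N
        rw [PadicInt.coe_natCast, Nat.cast_smul_eq_nsmul]
        exact AddSubgroup.nsmul_mem N hx n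
      have hz : z ∈ {z : ℤ_[p] | (z : ℚ_[p]) • x ∈ N} := by
        rw [← hclosed.closure_eq, hdense.closure_eq]
        exact Set.mem_univ z
      exact hz
    exact this c'
  -- Step B: a basis of E contained in N.
  obtain ⟨s, hsN, hsspan, hsli⟩ := exists_linearIndependent ℚ_[p] (N : Set E)
  rw [hNspan] at hsspan
  let b : Module.Basis s ℚ_[p] E := Module.Basis.mk hsli (by rw [Subtype.range_coe, hsspan])
  haveI : Fintype s := FiniteDimensional.fintypeBasisIndex b
  -- Step C: N is a neighborhood of 0.
  have hU : (N : Set E) ∈ 𝓝 (0 : E) := by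
    have hsub : (⋂ i : s, {x : E | ‖b.coord i x‖ ≤ 1}) ⊆ (N : Set E) := by
      intro x hx
      have hrepr : ∑ i : s, b.repr x i • b i = x := b.sum_repr x
      rw [← hrepr]
      refine AddSubgroup.sum_mem N fun i _ => ?_
      have hxi : ‖b.repr x i‖ ≤ 1 := by
        have := Set.mem_iInter.mp hx i
        simpa [Module.Basis.coord_apply] using this
      have hbi : (b i : E) ∈ N := by
        have : (b i : E) = (i : E) := by simp [b, Module.Basis.mk_apply]
        rw [this]; exact hsN i.2
      exact key _ hxi _ hbi
    refine Filter.mem_of_superset ?_ hsub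
    refine (Filter.iInter_mem).mpr fun i => ?_
    have hcont : Continuous (b.coord i) := LinearMap.continuous_of_finiteDimensional _
    have : {x : E | ‖b.coord i x‖ ≤ 1} = (b.coord i) ⁻¹' (Metric.closedBall 0 1) := by
      ext x; simp [Metric.mem_closedBall, dist_zero_right]
    rw [this]
    exact hcont.continuousAt.preimage_mem_nhds (by
      rw [map_zero]; exact Metric.closedBall_mem_nhds 0 one_pos)
  -- Step D: pull back along α.
  have hpull : ∀ n : ℕ, ∀ x : E, (α ^ n) x ∈ N → x ∈ N := by
    intro n
    induction n with
    | zero => intro x hx; simpa using hx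
    | succ n ih =>
      intro x hx
      have hx' : (α ^ n) (α x) ∈ N := by
        have : (α ^ (n + 1)) x = (α ^ n) (α x) := by
          rw [pow_succ]; rfl
        rwa [this] at hx
      have hax : α x ∈ N := ih _ hx'
      have : α x ∈ ⇑α '' (N : Set E) := by rw [hNstable]; exact hax
      obtain ⟨y, hy, hxy⟩ := this
      have : y = x := α.injective hxy
      rwa [← this]
  -- Conclude.
  refine AddSubgroup.eq_top_iff' N |>.mpr fun v => ?_
  have : ∀ᶠ n in atTop, (α ^ n) v ∈ N := (hcontr v).eventually_mem hU
  obtain ⟨n, hn⟩ := this.exists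
  exact hpull n v hn
end

section
/- Let G be a p-adic Lie group admitting a contractive automorphism. Then G is torsion-free and infinitely divisible (every element has an n-th root for each n ≥ 1). -/
open Filter Topology

/-- A `p`-adic Lie group `G` admitting a contractive automorphism is
torsion-free and infinitely divisible.  The `p`-adic Lie group structure is
encoded by an exponential map `exp : V → U` which is a homeomorphism from an
open additive subgroup `V` of the Lie algebra `L` (a topological `ℚ_p`-vector
space) onto an open subgroup `U` of `G`, satisfying `exp(nX) = exp(X)ⁿ`. -/
theorem stmt12 (p : ℕ) [Fact p.Prime] (G : Type*)
    [Group G] [TopologicalSpace G] [IsTopologicalGroup G]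
    (α : MulAut G) (hcα : Continuous α) (hcα' : Continuous α.symm)
    (hcontr : ∀ x : G, Tendsto (fun n : ℕ => (α ^ n) x) atTop (𝓝 1))
    (L : Type*) [AddCommGroup L] [Module ℚ_[p] L] [TopologicalSpace L]
    [IsTopologicalAddGroup L] [ContinuousSMul ℚ_[p] L]
    (V : AddSubgroup L) (hVopen : IsOpen (V : Set L))
    (U : Subgroup G) (hUopen : IsOpen (U : Set G))
    (exp : L → G)
    (hbij : Set.BijOn exp (V : Set L) (U : Set G))
    (hcont : ContinuousOn exp (V : Set L))
    (hopenmap : ∀ s : Set L, s ⊆ (V : Set L) → IsOpen s → IsOpen (exp '' s))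
    (hpow : ∀ X ∈ V, ∀ n : ℕ, exp ((n : ℚ_[p]) • X) = exp X ^ n) :
    (∀ x : G, ∀ n : ℕ, 0 < n → x ^ n = 1 → x = 1) ∧
    (∀ x : G, ∀ n : ℕ, 0 < n → ∃ y : G, y ^ n = x) := by
  have h0V : (0 : L) ∈ V := V.zero_mem
  have hexp0 : exp 0 = 1 := by simpa using hpow 0 h0V 0
  constructor
  · intro x n hn hxn
    obtain ⟨k, hk⟩ := ((hcontr x).eventually_mem (hUopen.mem_nhds U.one_mem)).exists
    obtain ⟨X, hXV, hX⟩ := hbij.surjOn hk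
    have h1 : exp ((n : ℚ_[p]) • X) = 1 := by
      rw [hpow X hXV n, hX, ← map_pow, hxn, map_one]
    have hmem : (n : ℚ_[p]) • X ∈ V := by
      rw [Nat.cast_smul_eq_nsmul]; exact V.nsmul_mem hXV n
    have h2 : (n : ℚ_[p]) • X = 0 := hbij.injOn hmem h0V (by rw [h1, hexp0])
    have hX0 : X = 0 := by
      rcases smul_eq_zero.mp h2 with h | h
      · exact absurd h (by exact_mod_cast hn.ne')
      · exact h
    have h3 : (α ^ k) x = 1 := by rw [← hX, hX0, hexp0]
    exact (α ^ k).injective (by rw [h3, map_one])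
  · intro x n hn
    have hn0 : ((n : ℚ_[p])) ≠ 0 := by exact_mod_cast hn.ne'
    set W : Set L := (V : Set L) ∩ ((fun X : L => (n : ℚ_[p]) • X) '' V) with hW
    have hWV : W ⊆ (V : Set L) := Set.inter_subset_left
    have hWopen : IsOpen W := hVopen.inter ((isOpenMap_smul₀ hn0) _ hVopen)
    have h0W : (0 : L) ∈ W := ⟨h0V, ⟨0, h0V, by simp⟩⟩
    have h1mem : (1 : G) ∈ exp '' W := ⟨0, h0W, hexp0⟩
    obtain ⟨k, hk⟩ :=
      ((hcontr x).eventually_mem ((hopenmap W hWV hWopen).mem_nhds h1mem)).exists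
    obtain ⟨X, ⟨hXV, X', hX'V, hXX'⟩, hX⟩ := hk
    refine ⟨(α ^ k).symm (exp X'), ?_⟩
    have h4 : exp X' ^ n = (α ^ k) x := by rw [← hpow X' hX'V n, show (n : ℚ_[p]) • X' = X from hXX', hX]
    rw [← map_pow, h4]
    exact (α ^ k).symm_apply_apply x
end

section
/- Let 1 → C → H → Q → 1 be a central extension of groups where C has finite exponent and Q is an infinitely divisible, torsion-free abelian group. Then H = C × L for some infinitely divisible subgroup L of H; moreover C = tor(H) and L is the set of infinitely divisible elements, both fully invariant. -/
/-!
Write `x ↦ x ^ d` for the `d`-th power map. A commutator `[w, b]` lies in `C`, so it is central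
and `[w ^ d, b] = [w, b] ^ d = 1`; since every element is a `d`-th power up to a central factor,
`H` is abelian. The `d`-th power map then kills `C` and so factors through `H / C`; hence its image
`L` is divisible and meets the torsion subgroup `C` trivially, while `x = (y ^ d x⁻¹)⁻¹ y ^ d`
with `y ^ d x⁻¹ ∈ C` shows `C L = H`.
-/

section Group

variable {H : Type*} [Group H]

theorem pow_mul_eq_mul_pow_of_mul_eq {w b c : H} (hc : c ∈ Subgroup.center H)
    (h : w * b = c * b * w) (n : ℕ) : w ^ n * b = c ^ n * b * w ^ n := by
  have hcw : Commute c w := (Subgroup.mem_center_iff.mp hc w).symm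
  induction n with
  | zero => simp
  | succ n ih =>
    calc w ^ (n + 1) * b = w * (w ^ n * b) := by rw [pow_succ', mul_assoc]
      _ = (w * c ^ n) * b * w ^ n := by rw [ih]; group
      _ = c ^ n * (w * b) * w ^ n := by rw [← (hcw.pow_left n).eq]; group
      _ = c ^ (n + 1) * b * w ^ (n + 1) := by rw [h, pow_succ, pow_succ']; group

variable {C : Subgroup H} {d : ℕ}

theorem commute_pow_of_commutator_mem (hC : C ≤ Subgroup.center H)
    (hexp : ∀ c ∈ C, c ^ d = 1) {w b : H} (h : w * b * w⁻¹ * b⁻¹ ∈ C) :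
    Commute (w ^ d) b := by
  have key := pow_mul_eq_mul_pow_of_mul_eq (w := w) (b := b) (hC h) (by group) d
  rwa [hexp _ h, one_mul] at key

theorem Commute.of_mul_inv_mem_center {x y b : H} (hz : y * x⁻¹ ∈ Subgroup.center H)
    (h : Commute y b) : Commute x b := by
  have hx : x = (y * x⁻¹)⁻¹ * y := by group
  rw [hx]
  have hzb : Commute (y * x⁻¹) b := (Subgroup.mem_center_iff.mp hz b).symm
  exact hzb.inv_left.mul_left h

theorem commute_of_central_extension (hC : C ≤ Subgroup.center H)
    (hexp : ∀ c ∈ C, c ^ d = 1) (habelian : ∀ a b : H, a * b * a⁻¹ * b⁻¹ ∈ C)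
    (hdiv : ∀ x : H, ∃ y : H, y ^ d * x⁻¹ ∈ C) (a b : H) : Commute a b := by
  obtain ⟨w, hw⟩ := hdiv a
  exact (commute_pow_of_commutator_mem hC hexp (habelian w b)).of_mul_inv_mem_center (hC hw)

theorem coe_eq_setOf_isOfFinOrder (hexp : ∀ c ∈ C, c ^ d = 1)
    (htf : ∀ x : H, ∀ n : ℕ, 0 < n → x ^ n ∈ C → x ∈ C) (hd : 0 < d) :
    (C : Set H) = {x : H | IsOfFinOrder x} := by
  ext x
  refine ⟨fun hx => isOfFinOrder_iff_pow_eq_one.mpr ⟨d, hd, hexp x hx⟩, fun hx => ?_⟩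
  obtain ⟨n, hn, hxn⟩ := isOfFinOrder_iff_pow_eq_one.mp hx
  exact htf x n hn (hxn ▸ C.one_mem)

theorem Subgroup.map_le_self_of_coe_eq_setOf_isOfFinOrder
    (hC : (C : Set H) = {x : H | IsOfFinOrder x}) (f : H →* H) : C.map f ≤ C := by
  rintro _ ⟨x, hx, rfl⟩
  have hx : IsOfFinOrder x := (Set.ext_iff.mp hC x).mp hx
  exact (Set.ext_iff.mp hC _).mpr (f.isOfFinOrder hx)

end Group

section CommGroup

variable {G : Type*} [CommGroup G] {C : Subgroup G} {d : ℕ}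

theorem pow_eq_pow_of_mul_inv_mem (hexp : ∀ c ∈ C, c ^ d = 1) {a b : G} (h : a * b⁻¹ ∈ C) :
    a ^ d = b ^ d := by
  rw [← inv_mul_cancel_right a b, mul_pow, hexp _ h, one_mul]

theorem exists_mem_range_pow_pow_eq (hexp : ∀ c ∈ C, c ^ d = 1)
    (hdiv : ∀ x : G, ∀ n : ℕ, 0 < n → ∃ y : G, y ^ n * x⁻¹ ∈ C) (hd : 0 < d)
    {x : G} (hx : x ∈ (powMonoidHom d).range) {n : ℕ} (hn : 0 < n) :
    ∃ y ∈ (powMonoidHom d).range, y ^ n = x := by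
  obtain ⟨x, rfl⟩ := hx
  obtain ⟨u, hu⟩ := hdiv x (n * d) (Nat.mul_pos hn hd)
  refine ⟨(u ^ d) ^ d, ⟨u ^ d, rfl⟩, ?_⟩
  calc ((u ^ d) ^ d) ^ n = (u ^ (n * d)) ^ d := by rw [← pow_mul, ← pow_mul, ← pow_mul]; ring_nf
    _ = x ^ d := pow_eq_pow_of_mul_inv_mem hexp hu

theorem inf_range_pow_eq_bot (hexp : ∀ c ∈ C, c ^ d = 1)
    (htf : ∀ x : G, ∀ n : ℕ, 0 < n → x ^ n ∈ C → x ∈ C) (hd : 0 < d) :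
    C ⊓ (powMonoidHom d).range = ⊥ := by
  rw [eq_bot_iff]
  rintro _ ⟨hx, y, rfl⟩
  exact hexp y (htf y d hd hx)

theorem sup_range_pow_eq_top (hdiv : ∀ x : G, ∃ y : G, y ^ d * x⁻¹ ∈ C) :
    C ⊔ (powMonoidHom d).range = ⊤ := by
  refine eq_top_iff.mpr fun x _ => ?_
  obtain ⟨y, hy⟩ := hdiv x
  rw [← inv_mul_cancel_left (y ^ d * x⁻¹) x, inv_mul_cancel_right]
  exact mul_mem (Subgroup.mem_sup_left (inv_mem hy)) (Subgroup.mem_sup_right ⟨y, rfl⟩)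

theorem coe_range_pow_eq_setOf_divisible (hexp : ∀ c ∈ C, c ^ d = 1)
    (hdiv : ∀ x : G, ∀ n : ℕ, 0 < n → ∃ y : G, y ^ n * x⁻¹ ∈ C) (hd : 0 < d) :
    (((powMonoidHom d : G →* G).range : Subgroup G) : Set G) =
      {x : G | ∀ n : ℕ, 0 < n → ∃ y : G, y ^ n = x} := by
  ext x
  refine ⟨fun hx n hn => ?_, fun hx => hx d hd⟩
  obtain ⟨y, -, hy⟩ := exists_mem_range_pow_pow_eq hexp hdiv hd hx hn
  exact ⟨y, hy⟩

theorem map_range_pow_le (f : G →* G) :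
    (powMonoidHom d).range.map f ≤ (powMonoidHom (α := G) d).range := by
  rintro _ ⟨_, ⟨y, rfl⟩, rfl⟩
  exact ⟨f y, (map_pow f y d).symm⟩

end CommGroup

/-- Let `1 → C → H → Q → 1` be a central extension with `C` of finite exponent
`d` and `Q = H/C` an infinitely divisible torsion-free abelian group.  Then
`H = C × L` for an infinitely divisible subgroup `L`; moreover `C = tor(H)`
and `L` is the set of infinitely divisible elements of `H`, and both are fully
invariant.  (The conditions on `Q = H/C` are phrased elementwise in `H`.) -/
theorem stmt16 (H : Type*) [Group H] (C : Subgroup H)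
    (hcentral : C ≤ Subgroup.center H)
    (d : ℕ) (hd : 0 < d) (hexp : ∀ c ∈ C, c ^ d = 1)
    (habelian : ∀ a b : H, a * b * a⁻¹ * b⁻¹ ∈ C)
    (htf : ∀ x : H, ∀ n : ℕ, 0 < n → x ^ n ∈ C → x ∈ C)
    (hdiv : ∀ x : H, ∀ n : ℕ, 0 < n → ∃ y : H, y ^ n * x⁻¹ ∈ C) :
    ∃ L : Subgroup H,
      (∀ x ∈ L, ∀ n : ℕ, 0 < n → ∃ y ∈ L, y ^ n = x) ∧
      C ⊓ L = ⊥ ∧ C ⊔ L = ⊤ ∧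
      (C : Set H) = {x : H | IsOfFinOrder x} ∧
      (L : Set H) = {x : H | ∀ n : ℕ, 0 < n → ∃ y : H, y ^ n = x} ∧
      (∀ f : H →* H, C.map f ≤ C ∧ L.map f ≤ L) := by
  let _ : CommGroup H :=
    { ‹Group H› with
      mul_comm := fun a b =>
        (commute_of_central_extension hcentral hexp habelian (hdiv · d hd) a b).eq }
  have htorsion := coe_eq_setOf_isOfFinOrder hexp htf hd
  refine ⟨(powMonoidHom d).range,
    fun _ hx _ hn => exists_mem_range_pow_pow_eq hexp hdiv hd hx hn,
    inf_range_pow_eq_bot hexp htf hd, ?_, htorsion,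
    coe_range_pow_eq_setOf_divisible hexp hdiv hd,
    fun f => ⟨C.map_le_self_of_coe_eq_setOf_isOfFinOrder htorsion f, ?_⟩⟩
  · exact sup_range_pow_eq_top fun x => hdiv x d hd
  · exact map_range_pow_le f
end

section
/- Let G be a group and N₁, …, Nₙ pairwise distinct normal subgroups such that each quotient G/N_k is a non-abelian simple group. Set D = N₁ ∩ ⋯ ∩ Nₙ and D_k = ⋂_{j≠k} N_j. Then the map θ : G/D → G/N₁ × ⋯ × G/Nₙ, xD ↦ (xN₁,…,xNₙ), is a group isomorphism, and θ maps D_k/D isomorphically onto the factor G/N_k. -/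
section Aux

variable {G : Type*} [Group G] {n : ℕ} (N : Fin n → Subgroup G) [inst : ∀ k, (N k).Normal]

lemma aux_ne_top (k : Fin n) (hs : IsSimpleGroup (G ⧸ N k)) : N k ≠ ⊤ := by
  intro h
  haveI := hs
  have h1 : Subsingleton (G ⧸ N k) := by
    rw [h]; exact QuotientGroup.subsingleton_quotient_top
  exact false_of_nontrivial_of_subsingleton (G ⧸ N k)

lemma aux_not_le (hdist : Function.Injective N) (hsimple : ∀ k, IsSimpleGroup (G ⧸ N k))
    {j k : Fin n} (hjk : j ≠ k) : ¬ N j ≤ N k := by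
  intro hle
  have hnorm : (Subgroup.map (QuotientGroup.mk' (N j)) (N k)).Normal :=
    (inst k).map _ (QuotientGroup.mk'_surjective _)
  rcases IsSimpleGroup.eq_bot_or_eq_top_of_normal _ hnorm with h | h
  · rw [Subgroup.map_eq_bot_iff, QuotientGroup.ker_mk'] at h
    exact hjk (hdist (le_antisymm hle h))
  · have hc : Subgroup.comap (QuotientGroup.mk' (N j))
        (Subgroup.map (QuotientGroup.mk' (N j)) (N k)) = ⊤ := by
      rw [h]; exact Subgroup.comap_top _
    rw [Subgroup.comap_map_eq, QuotientGroup.ker_mk', sup_of_le_left hle] at hc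
    exact aux_ne_top N k (hsimple k) hc

lemma aux_img (hdist : Function.Injective N) (hsimple : ∀ k, IsSimpleGroup (G ⧸ N k))
    {j k : Fin n} (hjk : j ≠ k) :
    Subgroup.map (QuotientGroup.mk' (N k)) (N j) = ⊤ := by
  have hnorm : (Subgroup.map (QuotientGroup.mk' (N k)) (N j)).Normal :=
    (inst j).map _ (QuotientGroup.mk'_surjective _)
  rcases IsSimpleGroup.eq_bot_or_eq_top_of_normal _ hnorm with h | h
  · rw [Subgroup.map_eq_bot_iff, QuotientGroup.ker_mk'] at h
    exact absurd h (aux_not_le N hdist hsimple hjk)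
  · exact h

open scoped commutatorElement in
lemma aux_perfect (k : Fin n) (hsimple : IsSimpleGroup (G ⧸ N k))
    (hnonab : ∃ a b : G ⧸ N k, a * b ≠ b * a) :
    ⁅(⊤ : Subgroup (G ⧸ N k)), (⊤ : Subgroup (G ⧸ N k))⁆ = ⊤ := by
  rcases IsSimpleGroup.eq_bot_or_eq_top_of_normal
      ⁅(⊤ : Subgroup (G ⧸ N k)), (⊤ : Subgroup (G ⧸ N k))⁆ inferInstance with h | h
  · obtain ⟨a, b, hab⟩ := hnonab
    exfalso
    apply hab
    have hmem : ⁅a, b⁆ ∈ ⁅(⊤ : Subgroup (G ⧸ N k)), (⊤ : Subgroup (G ⧸ N k))⁆ :=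
      Subgroup.commutator_mem_commutator (Subgroup.mem_top a) (Subgroup.mem_top b)
    rw [h, Subgroup.mem_bot] at hmem
    exact commutatorElement_eq_one_iff_mul_comm.mp hmem
  · exact h

lemma aux_normal_biInf (s : Finset (Fin n)) : (⨅ j ∈ s, N j).Normal := by
  constructor
  intro x hx g
  simp only [Subgroup.mem_iInf] at hx ⊢
  intro j hj
  exact (inst j).conj_mem x (hx j hj) g

lemma aux_big (hdist : Function.Injective N) (hsimple : ∀ k, IsSimpleGroup (G ⧸ N k))
    (hnonab : ∀ k, ∃ a b : G ⧸ N k, a * b ≠ b * a) (k : Fin n) (s : Finset (Fin n))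
    (hk : k ∉ s) :
    Subgroup.map (QuotientGroup.mk' (N k)) (⨅ j ∈ s, N j) = ⊤ := by
  induction s using Finset.induction_on with
  | empty =>
    simp only [Finset.notMem_empty, iInf_false, iInf_top]
    exact Subgroup.map_top_of_surjective _ (QuotientGroup.mk'_surjective _)
  | @insert a s ha ih =>
    have hak : a ≠ k := fun h => hk (h ▸ Finset.mem_insert_self a s)
    have hks : k ∉ s := fun h => hk (Finset.mem_insert_of_mem h)
    have h1 : Subgroup.map (QuotientGroup.mk' (N k)) (N a) = ⊤ :=
      aux_img N hdist hsimple hak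
    have h2 := ih hks
    have hB : (⨅ j ∈ s, N j).Normal := aux_normal_biInf N s
    rw [Finset.iInf_insert]
    refine le_antisymm le_top ?_
    calc (⊤ : Subgroup (G ⧸ N k))
        = ⁅(⊤ : Subgroup (G ⧸ N k)), (⊤ : Subgroup (G ⧸ N k))⁆ :=
          (aux_perfect N k (hsimple k) (hnonab k)).symm
      _ = ⁅Subgroup.map (QuotientGroup.mk' (N k)) (N a),
            Subgroup.map (QuotientGroup.mk' (N k)) (⨅ j ∈ s, N j)⁆ := by rw [h1, h2]
      _ = Subgroup.map (QuotientGroup.mk' (N k)) ⁅N a, ⨅ j ∈ s, N j⁆ :=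
          (Subgroup.map_commutator _ _ _).symm
      _ ≤ Subgroup.map (QuotientGroup.mk' (N k)) (N a ⊓ ⨅ j ∈ s, N j) :=
          Subgroup.map_mono (Subgroup.commutator_le_inf _ _)

lemma aux_Dk (hdist : Function.Injective N) (hsimple : ∀ k, IsSimpleGroup (G ⧸ N k))
    (hnonab : ∀ k, ∃ a b : G ⧸ N k, a * b ≠ b * a) (k : Fin n) :
    Subgroup.map (QuotientGroup.mk' (N k)) (⨅ j : {j : Fin n // j ≠ k}, N j.1) = ⊤ := by
  have heq : (⨅ j : {j : Fin n // j ≠ k}, N j.1) = ⨅ j ∈ Finset.univ.erase k, N j := by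
    apply le_antisymm
    · intro x hx
      simp only [Subgroup.mem_iInf, Finset.mem_erase] at hx ⊢
      intro j hj
      exact hx ⟨j, hj.1⟩
    · intro x hx
      simp only [Subgroup.mem_iInf, Finset.mem_erase] at hx ⊢
      intro j
      exact hx j.1 ⟨j.2, Finset.mem_univ _⟩
  rw [heq]
  exact aux_big N hdist hsimple hnonab k _ (Finset.notMem_erase k _)

lemma aux_ofFn_prod {M : Type*} [Monoid M] :
    ∀ (m : ℕ) (f : Fin m → M) (j : Fin m), (∀ i, i ≠ j → f i = 1) →
      (List.ofFn f).prod = f j := by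
  intro m
  induction m with
  | zero => intro f j _; exact j.elim0
  | succ m ih =>
    intro f j h
    rw [List.ofFn_succ, List.prod_cons]
    cases j using Fin.cases with
    | zero =>
      have h1 : (List.ofFn fun i : Fin m => f i.succ).prod = 1 := by
        apply List.prod_eq_one
        intro a ha
        obtain ⟨i, rfl⟩ := List.mem_ofFn.mp ha
        exact h i.succ (Fin.succ_ne_zero i)
      rw [h1, mul_one]
    | succ i =>
      rw [h 0 (Fin.succ_ne_zero i).symm, one_mul]
      exact ih (fun k => f k.succ) i
        (fun k hk => h k.succ (fun e => hk (Fin.succ_injective _ e)))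

end Aux

/-- Let `N₁, …, Nₙ` be pairwise distinct normal subgroups of `G` with all
quotients `G/N_k` non-abelian simple.  With `D = ⋂ N_k` and `D_k = ⋂_{j≠k} N_j`,
the map `θ : G/D → Π_k G/N_k` is an isomorphism carrying `D_k/D` onto the
`k`-th factor.  This is expressed via the homomorphism
`φ = (mk' (N k))_k : G →* Π_k G/N_k`: its kernel is `D`, it is surjective, and
it maps `D_k` onto the `k`-th factor subgroup. -/
theorem stmt17 (G : Type*) [Group G] (n : ℕ) (N : Fin n → Subgroup G)
    [inst : ∀ k, (N k).Normal]
    (hdist : Function.Injective N)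
    (hsimple : ∀ k, IsSimpleGroup (G ⧸ N k))
    (hnonab : ∀ k, ∃ a b : G ⧸ N k, a * b ≠ b * a) :
    (Pi.monoidHom (fun k => QuotientGroup.mk' (N k))).ker = ⨅ k, N k ∧
    Function.Surjective (Pi.monoidHom (fun k => QuotientGroup.mk' (N k))) ∧
    ∀ k : Fin n,
      Subgroup.map (Pi.monoidHom (fun k => QuotientGroup.mk' (N k)))
          (⨅ j : {j : Fin n // j ≠ k}, N j.1)
        = Subgroup.pi Set.univ (fun j => if j = k then ⊤ else ⊥) := by
  set φ := Pi.monoidHom (fun k => QuotientGroup.mk' (N k)) with hφ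
  have hφapp : ∀ (x : G) (j : Fin n), φ x j = QuotientGroup.mk' (N j) x := fun x j => rfl
  have hDk : ∀ k : Fin n, Subgroup.map φ (⨅ j : {j : Fin n // j ≠ k}, N j.1)
      = Subgroup.pi Set.univ (fun j => if j = k then ⊤ else ⊥) := by
    intro k
    apply le_antisymm
    · rintro _ ⟨x, hx, rfl⟩
      rw [Subgroup.mem_pi]
      intro j _
      by_cases hj : j = k
      · simp [hj]
      · simp only [hj, if_false, Subgroup.mem_bot, hφapp]
        rw [SetLike.mem_coe, Subgroup.mem_iInf] at hx
        exact (QuotientGroup.eq_one_iff x).mpr (hx ⟨j, hj⟩)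
    · intro y hy
      have := aux_Dk N hdist hsimple hnonab k
      have hyk : y k ∈ Subgroup.map (QuotientGroup.mk' (N k))
          (⨅ j : {j : Fin n // j ≠ k}, N j.1) := this ▸ Subgroup.mem_top (y k)
      obtain ⟨x, hx, hxk⟩ := hyk
      refine ⟨x, hx, funext fun j => ?_⟩
      by_cases hj : j = k
      · subst hj; exact hxk
      · rw [Subgroup.mem_pi] at hy
        have hyj := hy j (Set.mem_univ j)
        rw [if_neg hj, Subgroup.mem_bot] at hyj
        rw [hφapp, hyj]
        rw [SetLike.mem_coe, Subgroup.mem_iInf] at hx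
        exact (QuotientGroup.eq_one_iff x).mpr (hx ⟨j, hj⟩)
  refine ⟨?_, ?_, hDk⟩
  · ext x
    simp only [MonoidHom.mem_ker, Subgroup.mem_iInf, funext_iff, hφapp, Pi.one_apply]
    constructor
    · intro h k
      exact (QuotientGroup.eq_one_iff x).mp (h k)
    · intro h k
      exact (QuotientGroup.eq_one_iff x).mpr (h k)
  · intro y
    have hex : ∀ k : Fin n, ∃ x, x ∈ (⨅ j : {j : Fin n // j ≠ k}, N j.1) ∧
        QuotientGroup.mk' (N k) x = y k := by
      intro k
      have := aux_Dk N hdist hsimple hnonab k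
      have hyk : y k ∈ Subgroup.map (QuotientGroup.mk' (N k))
          (⨅ j : {j : Fin n // j ≠ k}, N j.1) := this ▸ Subgroup.mem_top (y k)
      obtain ⟨x, hx, hxk⟩ := hyk
      exact ⟨x, hx, hxk⟩
    choose x hx1 hx2 using hex
    refine ⟨(List.ofFn x).prod, funext fun j => ?_⟩
    rw [hφapp, map_list_prod, List.map_ofFn]
    have hall : ∀ i : Fin n, i ≠ j → ((QuotientGroup.mk' (N j)) ∘ x) i = 1 := by
      intro k hk
      have hxk := hx1 k
      rw [Subgroup.mem_iInf] at hxk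
      exact (QuotientGroup.eq_one_iff (x k)).mpr (hxk ⟨j, Ne.symm hk⟩)
    rw [aux_ofFn_prod n _ j hall]
    exact hx2 j
end
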